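/- arXiv:1310.0005 — 8 statements merged into one kernel-verified Lean document; each statement's English description precedes it below -/
import Mathlib

section
/- Entry (h,k) of the matrix (I - Q^{11})^{-1} Q^{12} is strictly positive if and only if there exists a path in G connecting regular agent h to stubborn agent k that does not pass through any other stubborn agent. -/
open Matrix Finset

private lemma aux_walk {I : Type*} {G : SimpleGraph I} (S : Finset I) (P : I → Prop)
    (hP : ∀ v, P v → ∀ u, G.Adj v u → u ∉ S ∧ P u) :
    ∀ {v s : I}, G.Walk v s → s ∈ S → P v → v ∉ S → False := by
  intro v s w
  induction w with
  | nil => intro hs _ hvS; exact hvS hs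
  | @cons a b c hab q ih =>
    intro hs hPa haS
    obtain ⟨hbS, hPb⟩ := hP a hPa b hab
    exact ih hs hPb hbS

/-- entry `(h,k)` of `(I - Q¹¹)⁻¹ Q¹²` is strictly positive iff
there is a path in `G` from the regular agent `h` to the stubborn agent `k`
not touching any other stubborn agent. -/
theorem stmt2 {I : Type*} [Fintype I] [DecidableEq I]
    (G : SimpleGraph I) [DecidableRel G.Adj] (hG : G.Connected)
    (Q : Matrix I I ℝ)
    (hQnn : ∀ i j, 0 ≤ Q i j)
    (hQrow : ∀ i, ∑ j, Q i j = 1)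
    (hQadapt : ∀ i j, i ≠ j → (0 < Q i j ↔ G.Adj i j))
    (S : Finset I) (hS : S.Nonempty)
    (Q11 : Matrix {x : I // x ∈ Sᶜ} {x : I // x ∈ Sᶜ} ℝ)
    (hQ11 : ∀ i j, Q11 i j = Q i.1 j.1)
    (Q12 : Matrix {x : I // x ∈ Sᶜ} {x : I // x ∈ S} ℝ)
    (hQ12 : ∀ i j, Q12 i j = Q i.1 j.1)
    (hinv : IsUnit (1 - Q11))
    (h : {x : I // x ∈ Sᶜ}) (k : {x : I // x ∈ S}) :
    0 < ((1 - Q11)⁻¹ * Q12) h k ↔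
      ∃ p : G.Walk h.1 k.1, ∀ v ∈ p.support, v = k.1 ∨ v ∉ S := by
  classical
  set y : {x : I // x ∈ Sᶜ} → ℝ := fun i => ((1 - Q11)⁻¹ * Q12) i k with hy
  have hQ11nn : ∀ a b, 0 ≤ Q11 a b := fun a b => (hQ11 a b) ▸ hQnn a.1 b.1
  have hdet : IsUnit (1 - Q11).det := (Matrix.isUnit_iff_isUnit_det _).mp hinv
  -- the key fixed point equation
  have hE : ∀ i, y i = (∑ t, Q11 i t * y t) + Q i.1 k.1 := by
    intro i
    have h1 : (1 - Q11) * ((1 - Q11)⁻¹ * Q12) = Q12 := by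
      rw [← Matrix.mul_assoc, Matrix.mul_nonsing_inv _ hdet, Matrix.one_mul]
    have h2 := congrFun (congrFun h1 i) k
    rw [Matrix.mul_apply] at h2
    have h3 : ∀ t, (1 - Q11) i t * ((1 - Q11)⁻¹ * Q12) t k
        = (if i = t then ((1 - Q11)⁻¹ * Q12) t k else 0) - Q11 i t * y t := by
      intro t
      simp [Matrix.sub_apply, Matrix.one_apply, sub_mul, ite_mul, hy]
    rw [Finset.sum_congr rfl (fun t _ => h3 t), Finset.sum_sub_distrib,
      Finset.sum_ite_eq] at h2
    simp only [Finset.mem_univ, if_true] at h2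
    rw [hQ12] at h2
    have : y i = ((1 - Q11)⁻¹ * Q12) i k := rfl
    linarith [h2]
  -- row sums
  have hrow : ∀ i : {x : I // x ∈ Sᶜ}, (∑ t, Q11 i t) = 1 - ∑ t ∈ S, Q i.1 t := by
    intro i
    have h1 : (∑ t, Q11 i t) = ∑ t ∈ Sᶜ, Q i.1 t := by
      rw [Finset.sum_congr rfl (fun t _ => hQ11 i t)]
      exact Finset.sum_coe_sort Sᶜ (Q i.1)
    have h2 : (∑ t ∈ Sᶜ, Q i.1 t) + ∑ t ∈ S, Q i.1 t = ∑ t, Q i.1 t :=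
      Finset.sum_compl_add_sum S (Q i.1)
    rw [hQrow i.1] at h2
    linarith [h1, h2]
  have hSsumnn : ∀ v : I, 0 ≤ ∑ t ∈ S, Q v t :=
    fun v => Finset.sum_nonneg fun t _ => hQnn v t
  -- nonnegativity of y
  have hnn : ∀ i, 0 ≤ y i := by
    by_contra hcon
    push_neg at hcon
    obtain ⟨i0, hi0⟩ := hcon
    obtain ⟨i, -, hi⟩ := Finset.exists_min_image Finset.univ y ⟨i0, Finset.mem_univ _⟩
    set m := y i with hm
    have hmneg : m < 0 := lt_of_le_of_lt (hi i0 (Finset.mem_univ _)) hi0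
    set P : I → Prop := fun v => ∃ t : {x : I // x ∈ Sᶜ}, t.1 = v ∧ y t = m with hP
    have keyP : ∀ v, P v → ∀ u, G.Adj v u → u ∉ S ∧ P u := by
      rintro v ⟨j, rfl, hjm⟩ u hadj
      have hvS : j.1 ∉ S := Finset.mem_compl.mp j.2
      have hterm : ∀ t ∈ Finset.univ, Q11 j t * m ≤ Q11 j t * y t :=
        fun t _ => mul_le_mul_of_nonneg_left (hi t (Finset.mem_univ t)) (hQ11nn j t)
      have hsum1 : ∑ t, Q11 j t * m ≤ ∑ t, Q11 j t * y t := Finset.sum_le_sum hterm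
      have hrsum : ∑ t, Q11 j t * m = m - (∑ t ∈ S, Q j.1 t) * m := by
        rw [← Finset.sum_mul, hrow j]; ring
      have hsm : (∑ t ∈ S, Q j.1 t) * m ≤ 0 :=
        mul_nonpos_of_nonneg_of_nonpos (hSsumnn j.1) hmneg.le
      have hck : 0 ≤ Q j.1 k.1 := hQnn _ _
      have hEq := hE j
      -- deduce equalities
      have hAeq : ∑ t, Q11 j t * m = ∑ t, Q11 j t * y t := by
        linarith [hsum1, hrsum, hsm, hck, hEq, hjm]
      have hs0 : (∑ t ∈ S, Q j.1 t) = 0 := by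
        have hsm0 : (∑ t ∈ S, Q j.1 t) * m = 0 := by
          linarith [hsum1, hrsum, hsm, hck, hEq, hjm]
        exact (mul_eq_zero.mp hsm0).resolve_right hmneg.ne
      have htermeq : ∀ t ∈ Finset.univ, Q11 j t * m = Q11 j t * y t :=
        (Finset.sum_eq_sum_iff_of_le hterm).mp hAeq
      have hvu : j.1 ≠ u := hadj.ne
      have huS : u ∉ S := by
        intro huS
        have h0 : Q j.1 u = 0 :=
          (Finset.sum_eq_zero_iff_of_nonneg (fun t _ => hQnn j.1 t)).mp hs0 u huS
        have : 0 < Q j.1 u := (hQadapt j.1 u hvu).mpr hadj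
        linarith
      refine ⟨huS, ⟨⟨u, Finset.mem_compl.mpr huS⟩, rfl, ?_⟩⟩
      have hQpos : 0 < Q11 j ⟨u, Finset.mem_compl.mpr huS⟩ := by
        rw [hQ11]; exact (hQadapt j.1 u hvu).mpr hadj
      have := htermeq ⟨u, Finset.mem_compl.mpr huS⟩ (Finset.mem_univ _)
      exact (mul_left_cancel₀ hQpos.ne' this).symm
    obtain ⟨s, hs⟩ := hS
    obtain ⟨w⟩ := hG.preconnected i.1 s
    exact aux_walk S P keyP w hs ⟨i, rfl, rfl⟩ (Finset.mem_compl.mp i.2)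
  -- walk implies positive
  have hpos : ∀ {v c : I} (p : G.Walk v c), c = k.1 → (∀ u ∈ p.support, u = k.1 ∨ u ∉ S) →
      ∀ (hv : v ∈ Sᶜ), 0 < y ⟨v, hv⟩ := by
    intro v c p
    induction p with
    | nil =>
      intro hc _ hv
      subst hc
      exact absurd k.2 (Finset.mem_compl.mp hv)
    | @cons a b c hab q ih =>
      intro hc hsupp hv
      subst hc
      have haS : a ∉ S := Finset.mem_compl.mp hv
      have hsum_nn : ∀ t ∈ Finset.univ, (0:ℝ) ≤ Q11 ⟨a, hv⟩ t * y t :=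
        fun t _ => mul_nonneg (hQ11nn _ t) (hnn t)
      by_cases hbk : b = k.1
      · have hak : a ≠ b := hab.ne
        have hQak : 0 < Q a k.1 := by
          rw [← hbk]; exact (hQadapt a b hak).mpr hab
        have := hE ⟨a, hv⟩
        have hsn : 0 ≤ ∑ t, Q11 ⟨a, hv⟩ t * y t := Finset.sum_nonneg hsum_nn
        rw [this]; positivity
      · have hbS : b ∉ S := by
          rcases hsupp b (by simp [SimpleGraph.Walk.support_cons]) with h1 | h1
          · exact absurd h1 hbk
          · exact h1
        have hvb : b ∈ Sᶜ := Finset.mem_compl.mpr hbS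
        have hyb : 0 < y ⟨b, hvb⟩ := by
          refine ih rfl (fun u hu => hsupp u ?_) hvb
          simp [SimpleGraph.Walk.support_cons, hu]
        have hQab : 0 < Q11 ⟨a, hv⟩ ⟨b, hvb⟩ := by
          rw [hQ11]; exact (hQadapt a b hab.ne).mpr hab
        have hone : Q11 ⟨a, hv⟩ ⟨b, hvb⟩ * y ⟨b, hvb⟩ ≤ ∑ t, Q11 ⟨a, hv⟩ t * y t :=
          Finset.single_le_sum hsum_nn (Finset.mem_univ _)
        have := hE ⟨a, hv⟩
        nlinarith [hQnn a k.1, hQab, hyb, hone]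
  constructor
  · -- positive implies walk
    intro hy0
    set Aset : Set {x : I // x ∈ Sᶜ} :=
      {i | ∃ p : G.Walk i.1 k.1, ∀ v ∈ p.support, v = k.1 ∨ v ∉ S} with hAset
    by_cases hhA : h ∈ Aset
    · exact hhA
    set F : Finset {x : I // x ∈ Sᶜ} := Finset.univ.filter (· ∉ Aset) with hF
    have hhF : h ∈ F := by simp [hF, hhA]
    obtain ⟨i, hiF, hi⟩ := Finset.exists_max_image F y ⟨h, hhF⟩
    set m := y i with hm
    have hmpos : 0 < m := lt_of_lt_of_le hy0 (hi h hhF)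
    have hiA : i ∉ Aset := by simpa [hF] using hiF
    set P : I → Prop := fun v => ∃ t : {x : I // x ∈ Sᶜ}, t.1 = v ∧ t ∉ Aset ∧ y t = m with hP
    have keyP : ∀ v, P v → ∀ u, G.Adj v u → u ∉ S ∧ P u := by
      rintro v ⟨j, rfl, hjA, hjm⟩ u hadj
      have hvS : j.1 ∉ S := Finset.mem_compl.mp j.2
      -- no positive weight to k
      have hck : Q j.1 k.1 = 0 := by
        by_contra hne
        have hpos' : 0 < Q j.1 k.1 := lt_of_le_of_ne (hQnn _ _) (Ne.symm hne)
        have hjk : j.1 ≠ k.1 := fun he => hvS (he ▸ k.2)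
        have hadjk : G.Adj j.1 k.1 := (hQadapt j.1 k.1 hjk).mp hpos'
        exact hjA ⟨SimpleGraph.Walk.cons hadjk SimpleGraph.Walk.nil, by
          intro u hu
          simp [SimpleGraph.Walk.support_cons] at hu
          rcases hu with rfl | rfl
          · exact Or.inr hvS
          · exact Or.inl rfl⟩
      -- positive weights only to non-Aset vertices
      have hnotA : ∀ t : {x : I // x ∈ Sᶜ}, 0 < Q11 j t → t ∉ Aset := by
        intro t hQt htA
        obtain ⟨p, hp⟩ := htA
        have hjt : j.1 ≠ t.1 := by
          intro he
          exact hjA ⟨p.copy he.symm rfl, by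
            simp only [SimpleGraph.Walk.support_copy]; exact hp⟩
        have hadjt : G.Adj j.1 t.1 := (hQadapt j.1 t.1 hjt).mp (by rwa [hQ11] at hQt)
        refine hjA ⟨SimpleGraph.Walk.cons hadjt p, ?_⟩
        intro u hu
        rw [SimpleGraph.Walk.support_cons] at hu
        rcases List.mem_cons.mp hu with rfl | hu
        · exact Or.inr hvS
        · exact hp u hu
      have hterm : ∀ t ∈ Finset.univ, Q11 j t * y t ≤ Q11 j t * m := by
        intro t _
        rcases eq_or_lt_of_le (hQ11nn j t) with he | hlt
        · rw [← he]; simp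
        · have htF : t ∈ F := by simp [hF, hnotA t hlt]
          exact mul_le_mul_of_nonneg_left (hi t htF) (hQ11nn j t)
      have hsum1 : ∑ t, Q11 j t * y t ≤ ∑ t, Q11 j t * m := Finset.sum_le_sum hterm
      have hrsum : ∑ t, Q11 j t * m = m - (∑ t ∈ S, Q j.1 t) * m := by
        rw [← Finset.sum_mul, hrow j]; ring
      have hsm : 0 ≤ (∑ t ∈ S, Q j.1 t) * m :=
        mul_nonneg (hSsumnn j.1) hmpos.le
      have hEq := hE j
      have hAeq : ∑ t, Q11 j t * y t = ∑ t, Q11 j t * m := by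
        linarith [hsum1, hrsum, hsm, hEq, hjm, hck]
      have hs0 : (∑ t ∈ S, Q j.1 t) = 0 := by
        have hsm0 : (∑ t ∈ S, Q j.1 t) * m = 0 := by
          linarith [hsum1, hrsum, hsm, hEq, hjm, hck]
        exact (mul_eq_zero.mp hsm0).resolve_right hmpos.ne'
      have htermeq : ∀ t ∈ Finset.univ, Q11 j t * y t = Q11 j t * m :=
        (Finset.sum_eq_sum_iff_of_le hterm).mp hAeq
      have hvu : j.1 ≠ u := hadj.ne
      have huS : u ∉ S := by
        intro huS
        have h0 : Q j.1 u = 0 :=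
          (Finset.sum_eq_zero_iff_of_nonneg (fun t _ => hQnn j.1 t)).mp hs0 u huS
        have : 0 < Q j.1 u := (hQadapt j.1 u hvu).mpr hadj
        linarith
      have htu : 0 < Q11 j ⟨u, Finset.mem_compl.mpr huS⟩ := by
        rw [hQ11]; exact (hQadapt j.1 u hvu).mpr hadj
      refine ⟨huS, ⟨⟨u, Finset.mem_compl.mpr huS⟩, rfl, hnotA _ htu, ?_⟩⟩
      have := htermeq ⟨u, Finset.mem_compl.mpr huS⟩ (Finset.mem_univ _)
      exact mul_left_cancel₀ htu.ne' this
    obtain ⟨s, hs⟩ := hS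
    obtain ⟨w⟩ := hG.preconnected i.1 s
    exact absurd (aux_walk S P keyP w hs ⟨i, rfl, hiA, rfl⟩ (Finset.mem_compl.mp i.2)) not_false
  · rintro ⟨p, hp⟩
    have := hpos p rfl hp h.2
    simpa [hy] using this
end

section
/- (Tree decomposition) Let T be a finite tree with stubborn set S⁰, and let T₁,…,T_n be the connected components of the induced subgraph on I \ S⁰, with node sets J₁,…,J_n. For each h, let Ŝ_h = T restricted to J_h together with the S⁰-nodes adjacent to J_h. Then for every ℓ ∈ J_h, the Harmonic Influence Centrality of ℓ computed on Ŝ_h equals the Harmonic Influence Centrality of ℓ computed on T. -/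
open Matrix Finset
open scoped Classical

lemma stmt7_energy_const {I : Type*} [Fintype I] (C : Matrix I I ℝ) (hsym : C.IsSymm)
    (hnn : ∀ i j, 0 ≤ C i j)
    (D : I → ℝ)
    (h1 : ∀ i, D i = 0 ∨ (∑ j, C i j) * D i = ∑ j, C i j * D j) :
    ∀ i j, 0 < C i j → D i = D j := by
  have hB : ∀ i, ∑ j, C i j * D i * D i = ∑ j, C i j * D i * D j := by
    intro i
    rcases h1 i with h | h
    · simp [h]
    · have h2 : (∑ j, C i j) * D i * D i = (∑ j, C i j * D j) * D i := by rw [h]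
      calc ∑ j, C i j * D i * D i = (∑ j, C i j) * D i * D i := by
            rw [Finset.sum_mul, Finset.sum_mul]
        _ = (∑ j, C i j * D j) * D i := h2
        _ = ∑ j, C i j * D i * D j := by
            rw [Finset.sum_mul]; apply Finset.sum_congr rfl; intros; ring
  have hA : ∑ i, ∑ j, C i j * D j * D j = ∑ i, ∑ j, C i j * D i * D i := by
    rw [Finset.sum_comm]
    exact Finset.sum_congr rfl fun i _ =>
      Finset.sum_congr rfl fun j _ => by rw [hsym.apply i j]
  have hE : ∑ i, ∑ j, C i j * (D i - D j)^2 = 0 := by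
    have expand : ∀ i j : I, C i j * (D i - D j)^2
        = C i j * D i * D i - 2 * (C i j * D i * D j) + C i j * D j * D j := by
      intros; ring
    calc ∑ i, ∑ j, C i j * (D i - D j)^2
        = ∑ i, ∑ j, (C i j * D i * D i - 2 * (C i j * D i * D j) + C i j * D j * D j) := by
          simp_rw [expand]
      _ = (∑ i, ∑ j, C i j * D i * D i) - 2 * (∑ i, ∑ j, C i j * D i * D j)
            + ∑ i, ∑ j, C i j * D j * D j := by
          simp [Finset.sum_add_distrib, Finset.sum_sub_distrib, Finset.mul_sum]
      _ = 0 := by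
          rw [hA, Finset.sum_congr rfl (fun i _ => (hB i).symm)]; ring
  intro i j hij
  have hterm : ∀ a ∈ (Finset.univ : Finset I), (0:ℝ) ≤ ∑ b, C a b * (D a - D b)^2 := by
    intro a _
    exact Finset.sum_nonneg fun b _ => mul_nonneg (hnn a b) (sq_nonneg _)
  have houter := (Finset.sum_eq_zero_iff_of_nonneg hterm).mp hE i (Finset.mem_univ i)
  have hinner := (Finset.sum_eq_zero_iff_of_nonneg
    (fun b _ => mul_nonneg (hnn i b) (sq_nonneg (D i - D b)))).mp houter j (Finset.mem_univ j)
  have hz : (D i - D j)^2 = 0 := by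
    rcases mul_eq_zero.mp hinner with h | h
    · exact absurd h (ne_of_gt hij)
    · exact h
  have := sq_eq_zero_iff.mp hz
  linarith

/-- Tree decomposition: the Harmonic Influence Centrality of
`ℓ` computed on the subtree `Ŝ` (the connected component `J` of `ℓ` in the
graph induced on `I \ S⁰`, together with its adjacent stubborn nodes) equals
the Harmonic Influence Centrality of `ℓ` computed on the whole tree. -/
theorem stmt7 {I : Type*} [Fintype I]
    (T : SimpleGraph I) (hT : T.IsTree)
    (C : Matrix I I ℝ) (hsym : C.IsSymm) (hnn : ∀ i j, 0 ≤ C i j)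
    (hadapt : ∀ i j, 0 < C i j ↔ T.Adj i j)
    (S0 : Set I) (ℓ : I) (hℓ : ℓ ∉ S0)
    (J : Set I)
    (hJ : J = {v : I | ∃ hv : v ∈ S0ᶜ, (T.induce S0ᶜ).Reachable ⟨v, hv⟩ ⟨ℓ, hℓ⟩})
    (Shat : Set I)
    (hShat : Shat = J ∪ {s | s ∈ S0 ∧ ∃ j ∈ J, T.Adj s j})
    -- `W` : the voltage on the whole tree `T`
    (W : I → ℝ)
    (hW0 : ∀ s ∈ S0, W s = 0) (hWl : W ℓ = 1)
    (hWh : ∀ i, i ∉ S0 → i ≠ ℓ → (∑ j, C i j) * W i = ∑ j, C i j * W j)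
    -- `Wh` : the voltage on the subtree induced on `Shat`
    (Wh : I → ℝ)
    (hWh0 : ∀ s ∈ Shat, s ∈ S0 → Wh s = 0) (hWhl : Wh ℓ = 1)
    (hWhh : ∀ i ∈ Shat, i ∉ S0 → i ≠ ℓ →
      (∑ j ∈ Finset.univ.filter (· ∈ Shat), C i j) * Wh i
        = ∑ j ∈ Finset.univ.filter (· ∈ Shat), C i j * Wh j) :
    ∑ i ∈ Finset.univ.filter (fun i => i ∈ Shat ∧ i ≠ ℓ), Wh i
      = ∑ i ∈ Finset.univ.filter (fun i => i ≠ ℓ), W i := by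
  -- extend `Wh` by zero outside `Shat`
  set V : I → ℝ := fun i => if i ∈ Shat then Wh i else 0 with hV
  -- basic membership facts
  have hℓJ : ℓ ∈ J := by
    rw [hJ]; exact ⟨hℓ, SimpleGraph.Reachable.refl _⟩
  have hℓShat : ℓ ∈ Shat := by rw [hShat]; exact Or.inl hℓJ
  -- a non-stubborn node adjacent to `J` is in `J`
  have hadjJ : ∀ i ∈ J, ∀ j, j ∉ S0 → T.Adj i j → j ∈ J := by
    intro i hi j hjS0 hadjij
    rw [hJ] at hi ⊢
    obtain ⟨hiS0, hreach⟩ := hi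
    refine ⟨hjS0, ?_⟩
    have hadj' : (T.induce S0ᶜ).Adj ⟨j, hjS0⟩ ⟨i, hiS0⟩ := by
      simp [hadjij.symm]
    exact hadj'.reachable.trans hreach
  -- a node in `J` is in `Shat`, and any neighbor of a `J`-node is in `Shat`
  have hJShat : ∀ i ∈ J, i ∈ Shat := fun i hi => by rw [hShat]; exact Or.inl hi
  have hnbr : ∀ i ∈ J, ∀ j, T.Adj i j → j ∈ Shat := by
    intro i hi j hadjij
    by_cases hjS0 : j ∈ S0
    · rw [hShat]; exact Or.inr ⟨hjS0, i, hi, hadjij.symm⟩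
    · exact hJShat j (hadjJ i hi j hjS0 hadjij)
  -- nodes in `Shat \ S0` are in `J`
  have hShatJ : ∀ i ∈ Shat, i ∉ S0 → i ∈ J := by
    intro i hi hiS0
    rw [hShat] at hi
    rcases hi with h | h
    · exact h
    · exact absurd h.1 hiS0
  -- D := W - V satisfies the hypotheses of the energy lemma
  set D : I → ℝ := fun i => W i - V i with hD
  have h1 : ∀ i, D i = 0 ∨ (∑ j, C i j) * D i = ∑ j, C i j * D j := by
    intro i
    by_cases hiS0 : i ∈ S0
    · left
      have hVi : V i = 0 := by
        rw [hV]; dsimp only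
        split_ifs with h
        · exact hWh0 i h hiS0
        · rfl
      simp [hD, hW0 i hiS0, hVi]
    · by_cases hil : i = ℓ
      · left; simp [hD, hV, hil, hWl, hWhl, hℓShat]
      · right
        -- both W and V are harmonic at i
        have hWharm := hWh i hiS0 hil
        have hVharm : (∑ j, C i j) * V i = ∑ j, C i j * V j := by
          by_cases hiShat : i ∈ Shat
          · -- i ∈ J; all neighbors lie in Shat
            have hiJ : i ∈ J := hShatJ i hiShat hiS0
            have hzero : ∀ j, j ∉ Shat → C i j = 0 := by
              intro j hj
              by_contra hne
              have hpos : 0 < C i j := lt_of_le_of_ne (hnn i j) (Ne.symm hne)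
              exact hj (hnbr i hiJ j ((hadapt i j).mp hpos))
            have e1 : ∑ j, C i j = ∑ j ∈ Finset.univ.filter (· ∈ Shat), C i j := by
              rw [Finset.sum_filter]
              apply Finset.sum_congr rfl
              intro j _
              split_ifs with h
              · rfl
              · exact (hzero j h)
            have e2 : ∑ j, C i j * V j = ∑ j ∈ Finset.univ.filter (· ∈ Shat), C i j * Wh j := by
              rw [Finset.sum_filter]
              apply Finset.sum_congr rfl
              intro j _
              split_ifs with h
              · simp [hV, h]
              · simp [hzero j h]
            have hVi : V i = Wh i := by simp [hV, hiShat]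
            rw [e1, e2, hVi]
            exact hWhh i hiShat hiS0 hil
          · -- i ∉ Shat : V i = 0 and every summand on the right vanishes
            have hVi : V i = 0 := by simp [hV, hiShat]
            rw [hVi, mul_zero]
            symm
            apply Finset.sum_eq_zero
            intro j _
            by_cases hCij : C i j = 0
            · simp [hCij]
            · have hpos : 0 < C i j := lt_of_le_of_ne (hnn i j) (Ne.symm hCij)
              have hadjij : T.Adj i j := (hadapt i j).mp hpos
              have hVj : V j = 0 := by
                rw [hV]; dsimp only
                split_ifs with hjShat
                · by_cases hjS0 : j ∈ S0
                  · exact hWh0 j hjShat hjS0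
                  · exact absurd (hJShat i (hadjJ j (hShatJ j hjShat hjS0) i hiS0 hadjij.symm))
                      hiShat
                · rfl
              simp [hVj]
        have : (∑ j, C i j) * (W i - V i) = ∑ j, (C i j * W j - C i j * V j) := by
          rw [Finset.sum_sub_distrib, mul_sub, hWharm, hVharm]
        simpa [hD, mul_sub] using this
  -- D is constant on the tree, hence identically D ℓ = 0
  have hDadj := stmt7_energy_const C hsym hnn D h1
  have hDℓ : D ℓ = 0 := by simp [hD, hV, hWl, hWhl, hℓShat]
  have hwalk : ∀ u v : I, ∀ _ : T.Walk u v, D u = D v := by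
    intro u v w
    induction w with
    | nil => rfl
    | cons hadjuv p ih =>
        exact (hDadj _ _ ((hadapt _ _).mpr hadjuv)).trans ih
  have hDzero : ∀ i, D i = 0 := by
    intro i
    obtain ⟨w⟩ := hT.isConnected.preconnected i ℓ
    rw [← hDℓ]
    exact hwalk i ℓ w
  have hWV : ∀ i, W i = V i := fun i => by have := hDzero i; simp [hD] at this; linarith
  -- conclude
  rw [show (Finset.univ.filter (fun i => i ≠ ℓ))
      = Finset.univ.filter (fun i => i ∈ Shat ∧ i ≠ ℓ)
        ∪ Finset.univ.filter (fun i => i ∉ Shat ∧ i ≠ ℓ) from ?_]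
  · rw [Finset.sum_union ?hdisj]
    case hdisj =>
      rw [Finset.disjoint_filter]
      intro x _ hx hx'
      exact hx'.1 hx.1
    have h2 : ∑ i ∈ Finset.univ.filter (fun i => i ∉ Shat ∧ i ≠ ℓ), W i = 0 := by
      apply Finset.sum_eq_zero
      intro i hi
      rw [Finset.mem_filter] at hi
      rw [hWV i]
      simp [hV, hi.2.1]
    have h1' : ∑ i ∈ Finset.univ.filter (fun i => i ∈ Shat ∧ i ≠ ℓ), Wh i
        = ∑ i ∈ Finset.univ.filter (fun i => i ∈ Shat ∧ i ≠ ℓ), W i := by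
      apply Finset.sum_congr rfl
      intro i hi
      rw [Finset.mem_filter] at hi
      rw [hWV i]
      simp [hV, hi.2.1]
    rw [h1', h2, add_zero]
  · ext x
    simp only [Finset.mem_filter, Finset.mem_union, Finset.mem_univ, true_and]
    tauto
end

section
/- On a tree, if ℓ ∈ I \ S⁰ and j ∈ I is a node such that the unique path from j to ℓ passes through some node of S⁰, then W^{(ℓ)}(j) = 0. -/
open Matrix Finset

private lemma aux8 {I : Type*} [Fintype I] [DecidableEq I]
    (T : SimpleGraph I) [DecidableRel T.Adj] (hT : T.IsTree)
    (Q : Matrix I I ℝ)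
    (hQnn : ∀ i j, 0 ≤ Q i j)
    (hQrow : ∀ i, ∑ j, Q i j = 1)
    (hQadapt : ∀ i j, i ≠ j → (0 < Q i j ↔ T.Adj i j))
    (S0 : Set I) (ℓ : I) (hℓ : ℓ ∉ S0)
    (W : I → ℝ)
    (hW0 : ∀ s ∈ S0, W s = 0)
    (hWh : ∀ i, i ∉ S0 → i ≠ ℓ → W i = ∑ j, Q i j * W j)
    (j : I) (hj : ∀ p : T.Walk j ℓ, ∃ s ∈ S0, s ∈ p.support)
    (hjS : j ∉ S0) :
    W j ≤ 0 := by
  classical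
  set C : Set I := {i | i ∉ S0 ∧ ∀ p : T.Walk i ℓ, ∃ s ∈ S0, s ∈ p.support} with hC
  have hjC : j ∈ C := ⟨hjS, hj⟩
  have hℓC : ℓ ∉ C := by
    rintro ⟨h1, h2⟩
    obtain ⟨s, hs, hsp⟩ := h2 SimpleGraph.Walk.nil
    simp [SimpleGraph.Walk.support_nil] at hsp
    exact h1 (hsp ▸ hs)
  have hclose : ∀ i ∈ C, ∀ k, T.Adj i k → k ∉ S0 → k ∈ C := by
    rintro i ⟨hiS, hiw⟩ k hadj hkS
    refine ⟨hkS, fun p => ?_⟩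
    obtain ⟨s, hs, hsp⟩ := hiw (SimpleGraph.Walk.cons hadj p)
    rw [SimpleGraph.Walk.support_cons] at hsp
    rcases List.mem_cons.1 hsp with h | h
    · exact absurd (h ▸ hs) hiS
    · exact ⟨s, hs, h⟩
  obtain ⟨i0, hi0mem, hi0max⟩ :=
    Finset.exists_max_image (Finset.univ.filter (· ∈ C)) W ⟨j, by simp [hjC]⟩
  simp only [Finset.mem_filter, Finset.mem_univ, true_and] at hi0mem
  have hmax : ∀ i ∈ C, W i ≤ W i0 := fun i hi => hi0max i (by simp [hi])
  set M := W i0 with hM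
  by_contra hncontra
  push_neg at hncontra
  have hMpos : 0 < M := lt_of_lt_of_le hncontra (hmax j hjC)
  have hterm : ∀ i ∈ C, ∀ k, Q i k * W k ≤ Q i k * M := by
    intro i hi k
    rcases eq_or_lt_of_le (hQnn i k) with h0 | hpos
    · rw [← h0]; simp
    · have hWk : W k ≤ M := by
        by_cases hik : i = k
        · exact hik ▸ hmax i hi
        · have hadj := (hQadapt i k hik).1 hpos
          by_cases hkS : k ∈ S0
          · rw [hW0 k hkS]; exact le_of_lt hMpos
          · exact hmax k (hclose i hi k hadj hkS)
      exact mul_le_mul_of_nonneg_left hWk (le_of_lt hpos)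
  have key : ∀ {i e : I} (p : T.Walk i e), e = ℓ → i ∈ C → W i = M → False := by
    intro i e p
    induction p with
    | nil => intro he hiC _; exact hℓC (he ▸ hiC)
    | @cons a b c h q ih =>
      intro hce haC haM
      have haS : a ∉ S0 := haC.1
      have haℓ : a ≠ ℓ := fun he => hℓC (he ▸ haC)
      have hQab : 0 < Q a b := (hQadapt a b h.ne).2 h
      have hsum : W a = ∑ k, Q a k * W k := hWh a haS haℓ
      by_cases hbS : b ∈ S0
      · have hlt : ∑ k, Q a k * W k < ∑ k, Q a k * M := by
          apply Finset.sum_lt_sum (fun k _ => hterm a haC k)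
          exact ⟨b, Finset.mem_univ b, by
            rw [hW0 b hbS]
            simpa using mul_lt_mul_of_pos_left hMpos hQab⟩
        rw [← hsum, ← Finset.sum_mul, hQrow, one_mul, haM] at hlt
        exact lt_irrefl M hlt
      · have hbC : b ∈ C := hclose a haC b h hbS
        have heq : ∀ k ∈ Finset.univ, Q a k * W k = Q a k * M := by
          rw [← Finset.sum_eq_sum_iff_of_le (fun k _ => hterm a haC k)]
          rw [← hsum, ← Finset.sum_mul, hQrow, one_mul, haM]
        have hWb : W b = M :=
          mul_left_cancel₀ (ne_of_gt hQab) (heq b (Finset.mem_univ b))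
        exact ih hce hbC hWb
  obtain ⟨p⟩ := hT.isConnected.preconnected i0 ℓ
  exact key p rfl hi0mem rfl

/-- on a tree, if every path from `j` to `ℓ` passes through a
stubborn node of `S⁰`, then `W^{(ℓ)}(j) = 0`. -/
theorem stmt8 {I : Type*} [Fintype I] [DecidableEq I]
    (T : SimpleGraph I) [DecidableRel T.Adj] (hT : T.IsTree)
    (Q : Matrix I I ℝ)
    (hQnn : ∀ i j, 0 ≤ Q i j)
    (hQrow : ∀ i, ∑ j, Q i j = 1)
    (hQadapt : ∀ i j, i ≠ j → (0 < Q i j ↔ T.Adj i j))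
    (S0 : Set I) (ℓ : I) (hℓ : ℓ ∉ S0)
    (W : I → ℝ)
    (hW0 : ∀ s ∈ S0, W s = 0) (hWl : W ℓ = 1)
    (hWh : ∀ i, i ∉ S0 → i ≠ ℓ → W i = ∑ j, Q i j * W j)
    (j : I) (hj : ∀ p : T.Walk j ℓ, ∃ s ∈ S0, s ∈ p.support) :
    W j = 0 := by
  by_cases hjS : j ∈ S0
  · exact hW0 j hjS
  · have h1 : W j ≤ 0 :=
      aux8 T hT Q hQnn hQrow hQadapt S0 ℓ hℓ W hW0 hWh j hj hjS
    have h2 : (-W) j ≤ 0 := by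
      apply aux8 T hT Q hQnn hQrow hQadapt S0 ℓ hℓ (-W)
        (fun s hs => by simp [hW0 s hs])
        (fun i hiS hiℓ => by
          simp only [Pi.neg_apply, mul_neg, ← Finset.sum_neg_distrib, neg_inj, hWh i hiS hiℓ])
        j hj hjS
    have : -W j ≤ 0 := h2
    linarith
end

section
/- (Effective resistance bound) Let T be a finite tree with unitary resistances on all edges, a,b ∈ I distinct, and W the voltage with W(a) = 0, W(b) = 1, harmonic at all other nodes. Then the effective resistance between a and b, which equals the length of the unique path from a to b, satisfies R^{eff}_{ab} ≤ 2 Σ_{i ∈ I} W(i) − 1. -/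
open Finset

section Aux
open SimpleGraph

variable {V : Type*} {G : SimpleGraph V}

lemma getVert_dist_le (p : G.Walk u v) (hc : G.Connected) (k : ℕ) (hk : k ≤ p.length) :
    G.dist u (p.getVert k) ≤ k := by
  induction k with
  | zero => simp [p.getVert_zero]
  | succ n ih =>
    have hn : n < p.length := hk
    have hadj := p.adj_getVert_succ hn
    calc G.dist u (p.getVert (n+1))
        ≤ G.dist u (p.getVert n) + G.dist (p.getVert n) (p.getVert (n+1)) :=
          hc.dist_triangle
      _ ≤ n + 1 := by
          have h1 : G.dist (p.getVert n) (p.getVert (n+1)) = 1 :=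
            (dist_eq_one_iff_adj).2 hadj
          have := ih (le_of_lt hn)
          omega

lemma shortest_walk_getVert (hc : G.Connected) (p : G.Walk u v)
    (hp : p.length = G.dist u v) (k : ℕ) (hk : k ≤ p.length) :
    G.dist u (p.getVert k) = k ∧ G.dist (p.getVert k) v = p.length - k := by
  have h1 : G.dist u (p.getVert k) ≤ k := getVert_dist_le p hc k hk
  have h2 : G.dist (p.getVert k) v ≤ p.length - k := by
    have hrev : p.reverse.getVert (p.length - k) = p.getVert k := by
      have := p.getVert_reverse (p.length - k)
      rwa [Nat.sub_sub_self hk] at this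
    have := getVert_dist_le p.reverse hc (p.length - k)
      (by simp)
    rw [hrev] at this
    rwa [SimpleGraph.dist_comm]
  have h3 : G.dist u v ≤ G.dist u (p.getVert k) + G.dist (p.getVert k) v :=
    hc.dist_triangle
  omega

lemma support_dist_to_end (hc : G.Connected) (p : G.Walk u v)
    (hp : p.length = G.dist u v) {w : V} (hw : w ∈ p.support) :
    ∃ n ≤ p.length, p.getVert n = w ∧ G.dist w v = p.length - n := by
  obtain ⟨n, hgv, hn⟩ := SimpleGraph.Walk.mem_support_iff_exists_getVert.1 hw
  exact ⟨n, hn, hgv, by rw [← hgv]; exact (shortest_walk_getVert hc p hp n hn).2⟩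

lemma neighbor_dist_ne (hT : G.IsTree) {a i j : V} (h : G.Adj i j) :
    G.dist i a ≠ G.dist j a := by
  intro e
  have hc := hT.isConnected
  obtain ⟨P, hPp, hPl⟩ := hc.exists_path_of_dist j a
  have hipos : 0 < G.dist i a := by
    rcases Nat.eq_zero_or_pos (G.dist i a) with h0 | h0
    · exfalso
      have hi' : i = a := (hc.dist_eq_zero_iff).1 h0
      have hj' : j = a := (hc.dist_eq_zero_iff).1 (e ▸ h0)
      exact h.ne (hi'.trans hj'.symm)
    · exact h0
  have hiP : i ∉ P.support := by
    intro hi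
    obtain ⟨n, hn, hgv, hdist⟩ := support_dist_to_end hc P hPl hi
    have hn0 : n = 0 := by rw [hPl, ← e] at hdist hn; omega
    rw [hn0, P.getVert_zero] at hgv
    exact h.ne hgv.symm
  have hcons : (P.cons h).IsPath := (SimpleGraph.Walk.cons_isPath_iff h P).2 ⟨hPp, hiP⟩
  obtain ⟨Q, hQp, hQl⟩ := hc.exists_path_of_dist i a
  have := (hT.existsUnique_path i a).unique hcons hQp
  have hlen : (P.cons h).length = Q.length := by rw [this]
  rw [SimpleGraph.Walk.length_cons, hPl, hQl, e] at hlen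
  omega

/-- In a tree, every vertex `i ≠ a` has a unique neighbor closer to `a`. -/
lemma tree_closer_neighbor (hT : G.IsTree) {a i : V} (hia : i ≠ a) :
    ∃ j0, G.Adj i j0 ∧ G.dist a j0 + 1 = G.dist a i ∧
      ∀ j, G.Adj i j → G.dist a j + 1 = G.dist a i → j = j0 := by
  have hc := hT.isConnected
  have hm : 0 < G.dist i a := hc.pos_dist_of_ne hia
  obtain ⟨p, hpp, hpl⟩ := hc.exists_path_of_dist i a
  have hplen : 0 < p.length := by omega
  refine ⟨p.getVert 1, ?_, ?_, ?_⟩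
  · have := p.adj_getVert_succ hplen
    rwa [p.getVert_zero] at this
  · have := (shortest_walk_getVert hc p hpl 1 hplen).2
    have d1 : G.dist a (p.getVert 1) = G.dist (p.getVert 1) a := SimpleGraph.dist_comm
    have d2 : G.dist a i = G.dist i a := SimpleGraph.dist_comm
    rw [d1, d2, this, hpl]
    omega
  · intro j hj hjd
    have d1 : G.dist a j = G.dist j a := SimpleGraph.dist_comm
    have d2 : G.dist a i = G.dist i a := SimpleGraph.dist_comm
    rw [d1, d2] at hjd
    obtain ⟨Q, hQp, hQl⟩ := hc.exists_path_of_dist j a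
    have hiQ : i ∉ Q.support := by
      intro hi
      obtain ⟨n, hn, hgv, hdist⟩ := support_dist_to_end hc Q hQl hi
      rw [hQl] at hdist
      omega
    have hcons : (Q.cons hj).IsPath := (SimpleGraph.Walk.cons_isPath_iff hj Q).2 ⟨hQp, hiQ⟩
    have heq := (hT.existsUnique_path i a).unique hcons hpp
    have : (Q.cons hj).getVert 1 = p.getVert 1 := by rw [heq]
    rwa [SimpleGraph.Walk.getVert_cons_succ, Q.getVert_zero] at this

lemma tree_neighbor_dist_sum [Fintype V] [DecidableEq V] [DecidableRel G.Adj]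
    (hT : G.IsTree) {a i : V} (hia : i ≠ a) :
    ∑ j ∈ G.neighborFinset i, (G.dist a j : ℝ) =
      G.degree i * G.dist a i + G.degree i - 2 := by
  have hc := hT.isConnected
  obtain ⟨j0, hj0adj, hj0d, hj0u⟩ := tree_closer_neighbor hT hia
  have hj0mem : j0 ∈ G.neighborFinset i := (G.mem_neighborFinset i j0).2 hj0adj
  have hfar : ∀ j ∈ (G.neighborFinset i).erase j0,
      G.dist a j = G.dist a i + 1 := by
    intro j hj
    obtain ⟨hne, hjmem⟩ := Finset.mem_erase.1 hj
    have hadj : G.Adj i j := (G.mem_neighborFinset i j).1 hjmem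
    have e1 : G.dist i j = 1 := dist_eq_one_iff_adj.2 hadj
    have e2 : G.dist j i = 1 := dist_eq_one_iff_adj.2 hadj.symm
    have h1 : G.dist a j ≤ G.dist a i + G.dist i j := hc.dist_triangle
    have h2 : G.dist a i ≤ G.dist a j + G.dist j i := hc.dist_triangle
    have h3 : G.dist a i ≠ G.dist a j := by
      have h4 := neighbor_dist_ne hT (a := a) hadj
      have d1 : G.dist i a = G.dist a i := SimpleGraph.dist_comm
      have d2 : G.dist j a = G.dist a j := SimpleGraph.dist_comm
      rw [d1, d2] at h4
      exact h4
    have h5 : ¬ (G.dist a j + 1 = G.dist a i) := fun hcl => hne (hj0u j hadj hcl)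
    omega
  have hdeg : 1 ≤ G.degree i := by
    rw [← G.card_neighborFinset_eq_degree i]
    exact Finset.card_pos.2 ⟨j0, hj0mem⟩
  have hm : 1 ≤ G.dist a i := by omega
  rw [← Finset.sum_erase_add _ _ hj0mem,
    Finset.sum_congr rfl (fun j hj => by rw [hfar j hj] : _),
    Finset.sum_const, Finset.card_erase_of_mem hj0mem,
    G.card_neighborFinset_eq_degree, nsmul_eq_mul]
  have hcast : (G.dist a j0 : ℝ) = (G.dist a i : ℝ) - 1 := by
    rw [← hj0d]; push_cast; ring
  rw [hcast, Nat.cast_sub hdeg]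
  push_cast
  ring

lemma min_principle [Fintype V] [DecidableEq V] [DecidableRel G.Adj]
    (hc : G.Connected) {a b : V} (f : V → ℝ) (ha : f a = 0) (hb : f b = 0)
    (hf : ∀ i, i ≠ a → i ≠ b →
      (G.degree i : ℝ) * f i = ∑ j ∈ G.neighborFinset i, f j)
    (i : V) : 0 ≤ f i := by
  obtain ⟨i0, -, hmin⟩ := Finset.exists_min_image Finset.univ f ⟨a, Finset.mem_univ a⟩
  have hmin' : ∀ j, f i0 ≤ f j := fun j => hmin j (Finset.mem_univ j)
  suffices h : f i0 = 0 by rw [← h]; exact hmin' i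
  have key : ∀ (v : V) (p : G.Walk v a), f v = f i0 → f i0 = 0 := by
    intro v p
    induction p with
    | nil => intro hv; rw [← hv, ha]
    | cons h q ih =>
      rename_i u x c
      intro hu
      by_cases hua : u = c
      · rw [← hu, hua, ha]
      by_cases hub : u = b
      · rw [← hu, hub, hb]
      have hh := hf u hua hub
      have hconst : ∀ j ∈ G.neighborFinset u, f u ≤ f j := by
        intro j _; rw [hu]; exact hmin' j
      have hsum : ∑ j ∈ G.neighborFinset u, f u = ∑ j ∈ G.neighborFinset u, f j := by
        rw [Finset.sum_const, G.card_neighborFinset_eq_degree, nsmul_eq_mul]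
        exact hh
      have hall := (Finset.sum_eq_sum_iff_of_le hconst).1 hsum
      have hx : f x = f u := (hall x ((G.mem_neighborFinset u x).2 h)).symm
      exact ih ha hf (hx.trans hu)
  obtain ⟨p⟩ := hc.preconnected i0 a
  exact key i0 p rfl

end Aux

/-- Effective resistance bound: on a tree with unit resistances,
the effective resistance between `a` and `b` (equal to the graph distance)
satisfies `R^{eff}_{ab} ≤ 2 ∑_i W(i) - 1`, where `W` is the voltage with
`W(a) = 0`, `W(b) = 1`, harmonic elsewhere. -/
theorem stmt10 {I : Type*} [Fintype I] [DecidableEq I]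
    (T : SimpleGraph I) [DecidableRel T.Adj] (hT : T.IsTree)
    (a b : I) (hab : a ≠ b)
    (W : I → ℝ) (hWa : W a = 0) (hWb : W b = 1)
    (hWh : ∀ i, i ≠ a → i ≠ b →
      (T.degree i : ℝ) * W i = ∑ j ∈ T.neighborFinset i, W j) :
    (T.dist a b : ℝ) ≤ 2 * ∑ i, W i - 1 := by
  have hc := hT.isConnected
  set d := T.dist a b with hd_def
  have hd : 0 < d := hc.pos_dist_of_ne hab
  have hdR : (0:ℝ) < (d:ℝ) := by exact_mod_cast hd
  set U : I → ℝ := fun i => ((d:ℝ) + T.dist a i - T.dist b i) / (2*d) with hU_def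
  have hUa : U a = 0 := by
    have h1 : T.dist a a = 0 := SimpleGraph.dist_self
    have h2 : T.dist b a = d := SimpleGraph.dist_comm
    simp only [hU_def, h1, h2]
    field_simp
    simp
  have hUb : U b = 1 := by
    have h1 : T.dist b b = 0 := SimpleGraph.dist_self
    simp only [hU_def, h1]
    field_simp
    ring
  have hUh : ∀ i, i ≠ a → i ≠ b →
      (T.degree i : ℝ) * U i = ∑ j ∈ T.neighborFinset i, U j := by
    intro i hia hib
    have hSa := tree_neighbor_dist_sum hT (a := a) hia
    have hSb := tree_neighbor_dist_sum hT (a := b) hib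
    simp only [hU_def]
    rw [← Finset.sum_div]
    have hexp : ∑ j ∈ T.neighborFinset i, ((d:ℝ) + T.dist a j - T.dist b j)
        = (T.degree i : ℝ) * d
          + (∑ j ∈ T.neighborFinset i, (T.dist a j : ℝ))
          - ∑ j ∈ T.neighborFinset i, (T.dist b j : ℝ) := by
      rw [Finset.sum_sub_distrib, Finset.sum_add_distrib, Finset.sum_const,
        T.card_neighborFinset_eq_degree, nsmul_eq_mul]
    rw [hexp, hSa, hSb]
    field_simp
    ring
  have hWU : ∀ i, W i = U i := by
    intro i
    have h1 := min_principle hc (a := a) (b := b) (fun i => W i - U i)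
      (by simp [hWa, hUa]) (by simp [hWb, hUb])
      (fun i hia hib => by
        rw [mul_sub, hWh i hia hib, hUh i hia hib, Finset.sum_sub_distrib]) i
    have h2 := min_principle hc (a := a) (b := b) (fun i => U i - W i)
      (by simp [hWa, hUa]) (by simp [hWb, hUb])
      (fun i hia hib => by
        rw [mul_sub, hWh i hia hib, hUh i hia hib, Finset.sum_sub_distrib]) i
    linarith
  have hWnn : ∀ i, 0 ≤ W i := by
    intro i
    rw [hWU i]
    have htri : T.dist b i ≤ T.dist b a + T.dist a i := hc.dist_triangle
    have hba : T.dist b a = d := SimpleGraph.dist_comm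
    rw [hba] at htri
    have : (T.dist b i : ℝ) ≤ (d:ℝ) + T.dist a i := by exact_mod_cast htri
    have h2d : (0:ℝ) < 2*d := by linarith
    exact div_nonneg (by linarith) (le_of_lt h2d)
  obtain ⟨p, hpp, hpl⟩ := hc.exists_path_of_dist a b
  rw [← hd_def] at hpl
  have hgv : ∀ k ≤ d, T.dist a (p.getVert k) = k ∧ T.dist (p.getVert k) b = d - k := by
    intro k hk
    have := shortest_walk_getVert hc p (by rw [hpl]) k (by omega)
    rwa [hpl] at this
  have hWval : ∀ k ∈ Finset.range (d+1), W (p.getVert k) = (k:ℝ) / d := by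
    intro k hk
    rw [Finset.mem_range] at hk
    obtain ⟨h1, h2⟩ := hgv k (by omega)
    have h3 : T.dist b (p.getVert k) = d - k := by
      rw [SimpleGraph.dist_comm]; exact h2
    rw [hWU, hU_def]
    simp only [h1, h3]
    rw [Nat.cast_sub (by omega : k ≤ d)]
    field_simp
    ring
  have hinj : ∀ k ∈ Finset.range (d+1), ∀ l ∈ Finset.range (d+1),
      p.getVert k = p.getVert l → k = l := by
    intro k hk l hl he
    rw [Finset.mem_range] at hk hl
    have h1 := (hgv k (by omega)).1
    have h2 := (hgv l (by omega)).1
    rw [he] at h1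
    omega
  have hsum1 : ∑ k ∈ Finset.range (d+1), W (p.getVert k)
      = ∑ i ∈ (Finset.range (d+1)).image p.getVert, W i :=
    (Finset.sum_image hinj).symm
  have hsum2 : ∑ i ∈ (Finset.range (d+1)).image p.getVert, W i ≤ ∑ i, W i :=
    Finset.sum_le_sum_of_subset_of_nonneg (Finset.subset_univ _)
      (fun i _ _ => hWnn i)
  have hgauss : ∑ k ∈ Finset.range (d+1), W (p.getVert k) = ((d:ℝ)+1)/2 := by
    rw [Finset.sum_congr rfl hWval, ← Finset.sum_div]
    have : ∑ k ∈ Finset.range (d+1), (k:ℝ) = (d:ℝ)*(d+1)/2 := by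
      have hnat := Finset.sum_range_id_mul_two (d+1)
      have : ((∑ k ∈ Finset.range (d+1), k : ℕ) : ℝ) * 2 = ((d+1) * d : ℕ) := by
        exact_mod_cast congrArg (Nat.cast (R := ℝ)) hnat
      push_cast at this
      linarith
    rw [this]
    field_simp
  have : ((d:ℝ)+1)/2 ≤ ∑ i, W i := by rw [← hgauss, hsum1]; exact hsum2
  linarith
end

section
/- (Optimum lies on paths between stubborn nodes) Let T be a tree with unit resistances and S⁰ a set of at least two leaves. Let K be the set of nodes lying on some simple path between two nodes of S⁰. If j ∉ K and i ∈ K is the node through which every path from j to S⁰ passes, then H(i) > H(j). Consequently, argmax_{ℓ ∈ I \ S⁰} H(ℓ) ⊆ K. -/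
open Finset
open scoped Classical

private lemma step_all_eq {I : Type*} [Fintype I] [DecidableEq I]
    (T : SimpleGraph I) [DecidableRel T.Adj] (f : I → ℝ) (M : ℝ) (v : I)
    (hub : ∀ k ∈ T.neighborFinset v, f k ≤ M) (hfv : f v = M)
    (hharm : (T.degree v : ℝ) * f v = ∑ k ∈ T.neighborFinset v, f k) :
    ∀ k ∈ T.neighborFinset v, f k = M := by
  have h0 : ∑ k ∈ T.neighborFinset v, (M - f k) = 0 := by
    rw [Finset.sum_sub_distrib, Finset.sum_const, ← hharm, hfv,
      SimpleGraph.card_neighborFinset_eq_degree, nsmul_eq_mul]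
    ring
  intro k hk
  have h1 := (Finset.sum_eq_zero_iff_of_nonneg
    (fun k hk => sub_nonneg.2 (hub k hk))).1 h0 k hk
  linarith

private lemma reach {I : Type*} [Fintype I] [DecidableEq I]
    (T : SimpleGraph I) [DecidableRel T.Adj] (Bs : Set I) (f : I → ℝ) (M : ℝ)
    (hub : ∀ v, f v ≤ M)
    (hharm : ∀ v, v ∉ Bs → (T.degree v : ℝ) * f v = ∑ k ∈ T.neighborFinset v, f k) :
    ∀ (a b : I) (p : T.Walk a b), b ∈ Bs → f a = M → ∃ c ∈ Bs, f c = M := by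
  intro a b p
  induction p with
  | nil => exact fun hb ha => ⟨_, hb, ha⟩
  | @cons u x b h p ih =>
    intro hb ha
    by_cases hu : u ∈ Bs
    · exact ⟨u, hu, ha⟩
    · exact ih hb (step_all_eq T f M u (fun k _ => hub k) ha (hharm u hu) x
        ((SimpleGraph.mem_neighborFinset _ _ _).2 h))

/-- Optimum lies on paths between stubborn nodes: on a tree with
unit resistances and at least two stubborn leaves, if `j ∉ K` and `i ∈ K` is
the node through which every path from `j` to `S⁰` passes, then `H(i) > H(j)`;
consequently every maximizer of `H` over `I \ S⁰` belongs to `K`. -/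
theorem stmt12 {I : Type*} [Fintype I] [DecidableEq I]
    (T : SimpleGraph I) [DecidableRel T.Adj] (hT : T.IsTree)
    (S0 : Finset I) (hS0card : 2 ≤ S0.card)
    (hleaf : ∀ s ∈ S0, T.degree s = 1)
    -- `V ℓ = W^{(ℓ)}` : the simple-random-walk voltage, 0 on `S⁰`, 1 at `ℓ`
    (V : I → I → ℝ)
    (hV0 : ∀ ℓ, ℓ ∉ S0 → ∀ s ∈ S0, V ℓ s = 0)
    (hV1 : ∀ ℓ, ℓ ∉ S0 → V ℓ ℓ = 1)
    (hVh : ∀ ℓ, ℓ ∉ S0 → ∀ v, v ∉ S0 → v ≠ ℓ →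
      (T.degree v : ℝ) * V ℓ v = ∑ k ∈ T.neighborFinset v, V ℓ k)
    (H : I → ℝ)
    (hH : ∀ ℓ, H ℓ = ∑ m ∈ Finset.univ.filter (· ≠ ℓ), V ℓ m)
    (K : Set I)
    (hK : K = {v : I | ∃ s' ∈ S0, ∃ s'' ∈ S0, s' ≠ s'' ∧
      ∃ p : T.Walk s' s'', p.IsPath ∧ v ∈ p.support}) :
    (∀ j, j ∉ K → j ∉ S0 → ∀ i, i ∈ K → i ∉ S0 →
      (∀ s ∈ S0, ∀ p : T.Walk j s, i ∈ p.support) → H j < H i) ∧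
    (∀ ℓ, ℓ ∉ S0 → (∀ m, m ∉ S0 → H m ≤ H ℓ) → ℓ ∈ K) := by
  obtain ⟨s1, hs1, s2, hs2, hs12⟩ := Finset.one_lt_card.mp (lt_of_lt_of_le one_lt_two hS0card)
  -- global upper bound on voltages
  have hVle1 : ∀ ℓ, ℓ ∉ S0 → ∀ m, V ℓ m ≤ 1 := by
    intro ℓ hℓ m
    obtain ⟨v0, -, hv0⟩ := Finset.exists_max_image Finset.univ (V ℓ) ⟨ℓ, Finset.mem_univ ℓ⟩
    obtain ⟨w⟩ := hT.isConnected.preconnected v0 s1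
    obtain ⟨c, hc, hceq⟩ := reach T {v | v ∈ S0 ∨ v = ℓ} (V ℓ) (V ℓ v0)
      (fun v => hv0 v (Finset.mem_univ v))
      (fun v hv => by
        simp only [Set.mem_setOf_eq] at hv
        push_neg at hv
        exact hVh ℓ hℓ v hv.1 hv.2)
      v0 s1 w (Or.inl hs1) rfl
    have hm := hv0 m (Finset.mem_univ m)
    simp only [Set.mem_setOf_eq] at hc
    rcases hc with hc | hc
    · rw [hV0 ℓ hℓ c hc] at hceq; linarith
    · rw [hc, hV1 ℓ hℓ] at hceq; linarith
  have part1 : ∀ j, j ∉ K → j ∉ S0 → ∀ i, i ∈ K → i ∉ S0 →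
      (∀ s ∈ S0, ∀ p : T.Walk j s, i ∈ p.support) → H j < H i := by
    intro j hjK hjS0 i hiK hiS0 hsep
    have hij : i ≠ j := fun h => hjK (by rw [← h]; exact hiK)
    -- strictness : V j i < 1
    have hVji : V j i < 1 := by
      rcases (hVle1 j hjS0 i).lt_or_eq with h | h
      · exact h
      · exfalso
        rw [hK] at hiK
        obtain ⟨t1, ht1, t2, ht2, ht12, q, hq, hiq⟩ := hiK
        have hjq : j ∉ q.support := fun hjmem =>
          hjK (by rw [hK]; exact ⟨t1, ht1, t2, ht2, ht12, q, hq, hjmem⟩)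
        have aux : ∀ (a t : I) (w : T.Walk a t), t ∈ S0 → (∀ x ∈ w.support, x ≠ j) →
            V j a = 1 → False := by
          intro a t w
          induction w with
          | nil =>
            intro ht _ h1
            rw [hV0 j hjS0 _ ht] at h1; norm_num at h1
          | @cons a u t hadj w ih =>
            intro ht hx h1
            have hvj : a ≠ j := hx a (SimpleGraph.Walk.start_mem_support _)
            by_cases hvS : a ∈ S0
            · rw [hV0 j hjS0 a hvS] at h1; norm_num at h1
            · have hall := step_all_eq T (V j) 1 a (fun k _ => hVle1 j hjS0 k) h1
                (hVh j hjS0 a hvS hvj)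
              exact ih ht (fun x hxm => hx x (by
                  rw [SimpleGraph.Walk.support_cons]; exact List.mem_cons_of_mem _ hxm))
                (hall u ((SimpleGraph.mem_neighborFinset _ _ _).2 hadj))
        refine aux i t2 (q.dropUntil i hiq) ht2 (fun x hxm hxj => ?_) h
        subst hxj
        exact hjq (SimpleGraph.Walk.support_dropUntil_subset q hiq hxm)
    -- the branch `B` of vertices separated from `S0` by `i`
    set Bfin : Finset I := Finset.univ.filter
        (fun v => (∀ s ∈ S0, ∀ p : T.Walk v s, i ∈ p.support) ∧ v ≠ i) with hBfin
    have hBprop : ∀ v ∈ Bfin, (∀ s ∈ S0, ∀ p : T.Walk v s, i ∈ p.support) ∧ v ≠ i := by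
      intro v hv
      simpa [hBfin] using hv
    have hjB : j ∈ Bfin := by
      simp only [hBfin, Finset.mem_filter, Finset.mem_univ, true_and]
      exact ⟨hsep, hij.symm⟩
    have hBnotS0 : ∀ v ∈ Bfin, v ∉ S0 := by
      intro v hv hvS
      obtain ⟨h1, h2⟩ := hBprop v hv
      have h3 := h1 v hvS SimpleGraph.Walk.nil
      simp only [SimpleGraph.Walk.support_nil, List.mem_singleton] at h3
      exact h2 h3.symm
    obtain ⟨m0, hm0B, hm0min⟩ := Finset.exists_min_image Bfin (V i) ⟨j, hjB⟩
    have hc1 : V i m0 ≤ 1 := hVle1 i hiS0 m0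
    have aux2 : ∀ (a t : I) (w : T.Walk a t), t ∈ S0 → a ∈ Bfin → V i a = V i m0 →
        V i m0 = 1 := by
      intro a t w
      induction w with
      | nil => intro ht ha _; exact absurd ht (hBnotS0 _ ha)
      | @cons a u t hadj w ih =>
        intro ht ha heq
        obtain ⟨hsepa, hai⟩ := hBprop a ha
        have haS : a ∉ S0 := hBnotS0 a ha
        have hcl : ∀ k ∈ T.neighborFinset a, k = i ∨ k ∈ Bfin := by
          intro k hk
          by_cases hki : k = i
          · exact Or.inl hki
          · refine Or.inr ?_
            simp only [hBfin, Finset.mem_filter, Finset.mem_univ, true_and]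
            refine ⟨fun s hs p => ?_, hki⟩
            have hadj' : T.Adj a k := (SimpleGraph.mem_neighborFinset _ _ _).1 hk
            have h5 := hsepa s hs (SimpleGraph.Walk.cons hadj' p)
            rw [SimpleGraph.Walk.support_cons] at h5
            rcases List.mem_cons.1 h5 with h' | h'
            · exact absurd h'.symm hai
            · exact h'
        have hharmneg : (T.degree a : ℝ) * (-V i a) = ∑ k ∈ T.neighborFinset a, (-V i k) := by
          rw [Finset.sum_neg_distrib, ← hVh i hiS0 a haS hai]; ring
        have hub : ∀ k ∈ T.neighborFinset a, -V i k ≤ -V i m0 := by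
          intro k hk
          rcases hcl k hk with h' | h'
          · rw [h', hV1 i hiS0]; linarith
          · have := hm0min k h'; linarith
        have hall := step_all_eq T (fun x => -V i x) (-V i m0) a hub
          (by rw [heq]) hharmneg
        have hu := hall u ((SimpleGraph.mem_neighborFinset _ _ _).2 hadj)
        have hu' : V i u = V i m0 := by linarith
        rcases hcl u ((SimpleGraph.mem_neighborFinset _ _ _).2 hadj) with h' | h'
        · rw [h', hV1 i hiS0] at hu'; exact hu'.symm
        · exact ih ht h' hu'
    obtain ⟨w0⟩ := hT.isConnected.preconnected m0 s1
    have hcval : V i m0 = 1 := aux2 m0 s1 w0 hs1 hm0B rfl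
    have hVij : V i j = 1 :=
      le_antisymm (hVle1 i hiS0 j) (by rw [← hcval]; exact hm0min j hjB)
    -- pointwise comparison : V j ≤ V i
    have hVle : ∀ m, V j m ≤ V i m := by
      intro m
      obtain ⟨v0, -, hv0⟩ := Finset.exists_max_image Finset.univ (fun x => V j x - V i x)
        ⟨j, Finset.mem_univ j⟩
      obtain ⟨w⟩ := hT.isConnected.preconnected v0 s1
      obtain ⟨c, hc, hceq⟩ := reach T {v | v ∈ S0 ∨ v = i ∨ v = j}
        (fun x => V j x - V i x) (V j v0 - V i v0)
        (fun v => hv0 v (Finset.mem_univ v))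
        (fun v hv => by
          simp only [Set.mem_setOf_eq] at hv
          push_neg at hv
          obtain ⟨h1, h2, h3⟩ := hv
          have e1 := hVh j hjS0 v h1 h3
          have e2 := hVh i hiS0 v h1 h2
          rw [mul_sub, e1, e2, Finset.sum_sub_distrib])
        v0 s1 w (Or.inl hs1) rfl
      have hm := hv0 m (Finset.mem_univ m)
      simp only [Set.mem_setOf_eq] at hc
      have hc0 : V j c - V i c ≤ 0 := by
        rcases hc with h' | h' | h'
        · rw [hV0 j hjS0 c h', hV0 i hiS0 c h']; norm_num
        · rw [h', hV1 i hiS0]; linarith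
        · rw [h', hV1 j hjS0, hVij]; norm_num
      linarith
    -- final comparison of the sums
    rw [hH i, hH j]
    have e1 : Finset.univ.filter (· ≠ i) =
        insert j (Finset.univ.filter (fun m => m ≠ i ∧ m ≠ j)) := by
      ext m
      simp only [Finset.mem_filter, Finset.mem_univ, true_and, Finset.mem_insert]
      constructor
      · intro hm
        by_cases hmj : m = j
        · exact Or.inl hmj
        · exact Or.inr ⟨hm, hmj⟩
      · rintro (rfl | ⟨hm, -⟩)
        · exact hij.symm
        · exact hm
    have e2 : Finset.univ.filter (· ≠ j) =
        insert i (Finset.univ.filter (fun m => m ≠ i ∧ m ≠ j)) := by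
      ext m
      simp only [Finset.mem_filter, Finset.mem_univ, true_and, Finset.mem_insert]
      constructor
      · intro hm
        by_cases hmi : m = i
        · exact Or.inl hmi
        · exact Or.inr ⟨hmi, hm⟩
      · rintro (rfl | ⟨-, hm⟩)
        · exact hij
        · exact hm
    rw [e1, e2, Finset.sum_insert (by simp), Finset.sum_insert (by simp)]
    have hsum : ∑ m ∈ Finset.univ.filter (fun m => m ≠ i ∧ m ≠ j), V j m ≤
        ∑ m ∈ Finset.univ.filter (fun m => m ≠ i ∧ m ≠ j), V i m :=
      Finset.sum_le_sum (fun m _ => hVle m)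
    rw [hVij]
    linarith
  refine ⟨part1, ?_⟩
  -- part 2 : maximizers lie in K
  intro ℓ hℓS0 hmax
  by_contra hℓK
  have hS0K : ∀ s ∈ S0, s ∈ K := by
    intro s hs
    obtain ⟨t, ht, hts⟩ := Finset.exists_mem_ne
      (lt_of_lt_of_le one_lt_two hS0card) s
    obtain ⟨w⟩ := hT.isConnected.preconnected s t
    rw [hK]
    exact ⟨s, hs, t, ht, Ne.symm hts, w.bypass, w.bypass_isPath,
      SimpleGraph.Walk.start_mem_support _⟩
  have hKmem : ∀ (t1 t2 : I), t1 ∈ S0 → t2 ∈ S0 → t1 ≠ t2 →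
      ∀ (q : T.Walk t1 t2), q.IsPath → ∀ x ∈ q.support, x ∈ K := by
    intro t1 t2 h1 h2 h12 q hq x hx
    rw [hK]
    exact ⟨t1, h1, t2, h2, h12, q, hq, hx⟩
  have hKpath : ∀ u, u ∈ K → ∀ s ∈ S0, ∀ p : T.Walk u s, p.IsPath →
      ∀ x ∈ p.support, x ∈ K := by
    intro u hu s hs p hp
    rw [hK] at hu
    obtain ⟨t1, ht1, t2, ht2, ht12, q, hq, huq⟩ := hu
    have hwalk : ∃ w : T.Walk u s, ∀ x ∈ w.support, x ∈ K := by
      by_cases hst : s = t2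
      · subst hst
        exact ⟨q.dropUntil u huq, fun x hx => hKmem t1 _ ht1 ht2 ht12 q hq x
          (SimpleGraph.Walk.support_dropUntil_subset q huq hx)⟩
      · obtain ⟨r⟩ := hT.isConnected.preconnected t2 s
        refine ⟨(q.dropUntil u huq).append r.bypass, ?_⟩
        intro x hx
        rcases (SimpleGraph.Walk.mem_support_append_iff _ _).1 hx with h' | h'
        · exact hKmem t1 t2 ht1 ht2 ht12 q hq x
            (SimpleGraph.Walk.support_dropUntil_subset q huq h')
        · exact hKmem t2 s ht2 hs (fun h => hst h.symm) r.bypass r.bypass_isPath x h'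
    obtain ⟨w, hw⟩ := hwalk
    have hpq : (⟨p, hp⟩ : T.Path u s) = ⟨w.bypass, w.bypass_isPath⟩ :=
      hT.IsAcyclic.path_unique _ _
    have hsupp : p.support = w.bypass.support := by
      have := congrArg (fun pp : T.Path u s => pp.1.support) hpq
      simpa using this
    intro x hx
    rw [hsupp] at hx
    exact hw x (SimpleGraph.Walk.support_bypass_subset w hx)
  have gate : ∀ (v t : I) (w : T.Walk v t), t ∈ S0 → v ∉ K →
      ∃ i, i ∈ K ∧ i ∉ S0 ∧ ∀ s ∈ S0, ∀ p : T.Walk v s, i ∈ p.support := by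
    intro v t w
    induction w with
    | nil => intro ht hv; exact absurd (hS0K _ ht) hv
    | @cons v u t hadj w ih =>
      intro ht hv
      by_cases huK : u ∈ K
      · refine ⟨u, huK, ?_, ?_⟩
        · -- u is not a stubborn leaf
          intro huS
          have hdeg : T.degree u = 1 := hleaf u huS
          have hnbr : T.neighborFinset u = {v} := by
            have hcard : (T.neighborFinset u).card = 1 := by
              rw [SimpleGraph.card_neighborFinset_eq_degree]; exact hdeg
            obtain ⟨a, ha⟩ := Finset.card_eq_one.1 hcard
            have hvmem : v ∈ T.neighborFinset u := (SimpleGraph.mem_neighborFinset _ _ _).2 hadj.symm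
            rw [ha] at hvmem ⊢
            rw [Finset.mem_singleton] at hvmem
            rw [hvmem]
          rw [hK] at huK
          obtain ⟨t1, ht1, t2, ht2, ht12, q, hq, huq⟩ := huK
          have key : ∀ (e : I) (wq : T.Walk u e), u ≠ e →
              (∀ x ∈ wq.support, x ∈ q.support) → False := by
            intro e wq hue hsub
            obtain ⟨k, hk, w2, rfl⟩ := SimpleGraph.Walk.exists_eq_cons_of_ne hue wq
            have hkv : k = v := by
              have hkm := (SimpleGraph.mem_neighborFinset _ _ _).2 hk
              rw [hnbr, Finset.mem_singleton] at hkm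
              exact hkm
            have hvq : v ∈ q.support := by
              apply hsub
              rw [SimpleGraph.Walk.support_cons, ← hkv]
              exact List.mem_cons_of_mem _ (SimpleGraph.Walk.start_mem_support _)
            exact hv (hKmem t1 t2 ht1 ht2 ht12 q hq v hvq)
          by_cases hut2 : u = t2
          · subst hut2
            exact key t1 q.reverse (fun h => ht12 h.symm)
              (fun x hx => by rw [SimpleGraph.Walk.support_reverse] at hx; exact List.mem_reverse.1 hx)
          · exact key t2 (q.dropUntil u huq) hut2
              (fun x hx => SimpleGraph.Walk.support_dropUntil_subset q huq hx)
        · -- u separates v from S0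
          intro s hs p
          by_contra hup
          have hp' : u ∉ p.bypass.support := fun h =>
            hup (SimpleGraph.Walk.support_bypass_subset p h)
          have hcp : (SimpleGraph.Walk.cons hadj.symm p.bypass).IsPath :=
            (SimpleGraph.Walk.bypass_isPath p).cons hp'
          have hvK : v ∈ K := hKpath u huK s hs _ hcp v
            (by rw [SimpleGraph.Walk.support_cons]
                exact List.mem_cons_of_mem _ (SimpleGraph.Walk.start_mem_support _))
          exact hv hvK
      · have huS0 : u ∉ S0 := fun h => huK (hS0K u h)
        obtain ⟨i, hiK, hiS0, hsep⟩ := ih ht huK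
        refine ⟨i, hiK, hiS0, fun s hs p => ?_⟩
        have h5 := hsep s hs (SimpleGraph.Walk.cons hadj.symm p)
        rw [SimpleGraph.Walk.support_cons] at h5
        rcases List.mem_cons.1 h5 with h' | h'
        · exact absurd (h' ▸ hiK) huK
        · exact h'
  obtain ⟨w⟩ := hT.isConnected.preconnected ℓ s1
  obtain ⟨i, hiK, hiS0, hsep⟩ := gate ℓ s1 w hs1 hℓK
  have hlt := part1 ℓ hℓK hℓS0 i hiK hiS0 hsep
  have hle := hmax i hiS0
  linarith
end

section
/- (Convexity along degree-2 strings) Let j₁,…,j_n be a maximal string of consecutive degree-2 nodes on a path between two stubborn nodes in a tree with unit resistances, with endpoints a and b adjacent to j₁ and j_n respectively. Then the map x ↦ H(j_x) (extended to real x ∈ [1,n] by the explicit formula H(j_x) = R_{<ab}/(R_{<ab}+x)·(H^{<ab}(a) + (x−1)/2) + (x−1)/2 + R_{ab>}/(R_{ab>}+n−x+1)·(H^{ab>}(b) + (n−x)/2) + (n−x)/2 + 1) is convex in x, given 2H^{<ab}(a) ≥ R_{<ab}+1 and 2H^{ab>}(b) ≥ R_{ab>}+1. Hence max over the string is attained at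 x ∈ {1,n}, i.e., adjacent to a node of degree ≥ 3 or stubborn. -/
lemma key (R H : ℝ) (hR : 0 < R) (hH : R + 1 ≤ 2 * H) (x y a b : ℝ)
    (hx : 0 < R + x) (hy : 0 < R + y) (ha : 0 ≤ a) (hb : 0 ≤ b) (hab : a + b = 1) :
    R / (R + (a * x + b * y)) * (H + (a * x + b * y - 1) / 2) ≤
      a * (R / (R + x) * (H + (x - 1) / 2)) + b * (R / (R + y) * (H + (y - 1) / 2)) := by
  obtain rfl : b = 1 - a := by linarith
  have hz : 0 < R + (a * x + (1 - a) * y) := by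
    rcases eq_or_lt_of_le ha with h | h
    · have : a = 0 := h.symm
      subst this; nlinarith [hy]
    · nlinarith [mul_pos h hx, mul_nonneg hb hy.le]
  set k := R * (2 * H - R - 1) / 2 with hk
  have hk0 : 0 ≤ k := by
    apply div_nonneg (mul_nonneg hR.le (by linarith)) (by norm_num)
  have hdecomp : ∀ w : ℝ, 0 < R + w →
      R / (R + w) * (H + (w - 1) / 2) = R / 2 + k / (R + w) := by
    intro w hw
    field_simp [hk]
    ring
  rw [hdecomp _ hx, hdecomp _ hy, hdecomp _ hz]
  have hid : a * (R / 2 + k / (R + x)) + (1 - a) * (R / 2 + k / (R + y))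
      - (R / 2 + k / (R + (a * x + (1 - a) * y)))
      = k * (a * (1 - a) * (x - y) ^ 2) / ((R + x) * ((R + y) * (R + (a * x + (1 - a) * y)))) := by
    field_simp
    ring
  have hpos : 0 ≤ k * (a * (1 - a) * (x - y) ^ 2)
      / ((R + x) * ((R + y) * (R + (a * x + (1 - a) * y)))) :=
    div_nonneg (mul_nonneg hk0 (mul_nonneg (mul_nonneg ha hb) (sq_nonneg _)))
      (by positivity)
  linarith

/-- Convexity along degree-2 strings: the explicit expression of
the Harmonic Influence Centrality along a string of degree-2 nodes is a convex
function of the position `x ∈ [1,n]`; hence its maximum over the string is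
attained at an endpoint. -/
theorem stmt13 (Ra Rb Ha Hb : ℝ) (hRa : 0 < Ra) (hRb : 0 < Rb)
    (hHa0 : 0 ≤ Ha) (hHb0 : 0 ≤ Hb)
    (hHa : Ra + 1 ≤ 2 * Ha) (hHb : Rb + 1 ≤ 2 * Hb)
    (n : ℝ) (hn : 1 ≤ n)
    (f : ℝ → ℝ)
    (hf : ∀ x, f x = Ra / (Ra + x) * (Ha + (x - 1) / 2) + (x - 1) / 2
      + Rb / (Rb + n - x + 1) * (Hb + (n - x) / 2) + (n - x) / 2 + 1) :
    ConvexOn ℝ (Set.Icc 1 n) f ∧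
      ∀ x ∈ Set.Icc 1 n, f x ≤ max (f 1) (f n) := by
  have hconv : ConvexOn ℝ (Set.Icc 1 n) f := by
    refine ⟨convex_Icc 1 n, ?_⟩
    intro x hx y hy a b ha hb hab
    obtain ⟨hx1, hx2⟩ := hx
    obtain ⟨hy1, hy2⟩ := hy
    rw [hf, hf, hf]
    simp only [smul_eq_mul]
    have hax : 0 < Ra + x := by linarith
    have hay : 0 < Ra + y := by linarith
    have hbx : 0 < Rb + (n - x + 1) := by linarith
    have hby : 0 < Rb + (n - y + 1) := by linarith
    have k1 := key Ra Ha hRa hHa x y a b hax hay ha hb hab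
    have k2 := key Rb Hb hRb hHb (n - x + 1) (n - y + 1) a b hbx hby ha hb hab
    have hzz : a * (n - x + 1) + b * (n - y + 1) = n - (a * x + b * y) + 1 := by
      linear_combination (n + 1) * hab
    rw [hzz] at k2
    have e0 : Rb / (Rb + n - (a * x + b * y) + 1) * (Hb + (n - (a * x + b * y)) / 2)
        = Rb / (Rb + (n - (a * x + b * y) + 1))
          * (Hb + (n - (a * x + b * y) + 1 - 1) / 2) := by ring_nf
    have expa : a * (Ra / (Ra + x) * (Ha + (x - 1) / 2) + (x - 1) / 2
          + Rb / (Rb + n - x + 1) * (Hb + (n - x) / 2) + (n - x) / 2 + 1)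
        = a * (Ra / (Ra + x) * (Ha + (x - 1) / 2)) + a * ((x - 1) / 2)
          + a * (Rb / (Rb + (n - x + 1)) * (Hb + (n - x + 1 - 1) / 2))
          + a * ((n - x) / 2) + a := by ring_nf
    have expb : b * (Ra / (Ra + y) * (Ha + (y - 1) / 2) + (y - 1) / 2
          + Rb / (Rb + n - y + 1) * (Hb + (n - y) / 2) + (n - y) / 2 + 1)
        = b * (Ra / (Ra + y) * (Ha + (y - 1) / 2)) + b * ((y - 1) / 2)
          + b * (Rb / (Rb + (n - y + 1)) * (Hb + (n - y + 1 - 1) / 2))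
          + b * ((n - y) / 2) + b := by ring_nf
    have l1 : a * ((x - 1) / 2) + b * ((y - 1) / 2) = (a * x + b * y - 1) / 2 := by
      linear_combination (-(1 : ℝ) / 2) * hab
    have l2 : a * ((n - x) / 2) + b * ((n - y) / 2) = (n - (a * x + b * y)) / 2 := by
      linear_combination (n / 2) * hab
    linarith [k1, k2]
  refine ⟨hconv, fun x hx => ?_⟩
  exact hconv.le_on_segment (Set.left_mem_Icc.mpr hn) (Set.right_mem_Icc.mpr hn)
    (by rwa [← segment_eq_Icc hn] at hx)
end

section
/- (HIC recursion on trees) On a tree with S⁰ a set of leaves, the quantities H^{i→j} := Σ_{ℓ ∈ I^{<ij}} W^{(i)}(ℓ) (the HIC of node i restricted to the subtree T^{<ij}) satisfy the message-passing recursion H^{i→j} = Σ_{k ∈ N_i \ {j}} W^{(i)}(k) · H^{k→i} + 1 for i ∉ S⁰, where W^{(i)}(k) is the voltage at k when i is at voltage 1 and S⁰ at voltage 0. -/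
open Matrix Finset
open scoped Classical

namespace Stmt16Aux

variable {I : Type*} {T : SimpleGraph I}

/-- In a tree, the support of any path is contained in the support of any walk
with the same endpoints. -/
lemma path_support_subset (hT : T.IsTree) {a b : I} (p w : T.Walk a b) (hp : p.IsPath) :
    p.support ⊆ w.support := by
  have h := (hT.existsUnique_path a b).unique hp w.bypass_isPath
  rw [h]; exact w.support_bypass_subset

/-- The unique path between two vertices of a tree. -/
noncomputable def uP (hT : T.IsTree) (a b : I) : T.Walk a b :=
  (hT.existsUnique_path a b).choose

lemma uP_isPath (hT : T.IsTree) (a b : I) : (uP hT a b).IsPath :=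
  (hT.existsUnique_path a b).choose_spec.1

lemma uP_eq (hT : T.IsTree) {a b : I} (p : T.Walk a b) (hp : p.IsPath) : uP hT a b = p :=
  (hT.existsUnique_path a b).choose_spec.2 p hp |>.symm ▸ rfl

lemma pred_iff (hT : T.IsTree) (a b ℓ : I) :
    (∀ w : T.Walk ℓ a, b ∈ w.support) ↔ b ∈ (uP hT ℓ a).support := by
  constructor
  · intro h; exact h _
  · intro h w; exact path_support_subset hT _ w (uP_isPath hT ℓ a) h

lemma end_mem_tail {c b : I} (w : T.Walk c b) (hcb : c ≠ b) : b ∈ w.support.tail := by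
  cases w with
  | nil => exact absurd rfl hcb
  | cons h q => simpa using q.end_mem_support

lemma end_not_mem_takeUntil [DecidableEq I] {ℓ b c : I} (p : T.Walk ℓ b) (hp : p.IsPath)
    (hc : c ∈ p.support) (hcb : c ≠ b) : b ∉ (p.takeUntil c hc).support := by
  have hnd : ((p.takeUntil c hc).support ++ (p.dropUntil c hc).support.tail).Nodup := by
    have h2 := hp.support_nodup
    rw [← p.take_spec hc, SimpleGraph.Walk.support_append] at h2
    exact h2
  intro hb
  exact (List.disjoint_of_nodup_append hnd) hb (end_mem_tail _ hcb)

lemma exists_adj_end : ∀ {a b : I} (p : T.Walk a b), a ≠ b → ∃ c, T.Adj c b ∧ c ∈ p.support := by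
  intro a b p
  induction p with
  | nil => intro h; exact absurd rfl h
  | @cons a d b h q ih =>
    intro _
    by_cases hdb : d = b
    · subst hdb; exact ⟨a, h, by simp⟩
    · obtain ⟨c, h1, h2⟩ := ih hdb
      exact ⟨c, h1, by simp [h2]⟩

end Stmt16Aux

namespace Stmt16Aux

open SimpleGraph Walk

variable {I : Type*} {T : SimpleGraph I}

lemma uP_adj (hT : T.IsTree) {k i : I} (hk : T.Adj k i) :
    uP hT k i = SimpleGraph.Walk.cons hk SimpleGraph.Walk.nil :=
  uP_eq hT _ (by simp [SimpleGraph.Walk.cons_isPath_iff, hk.ne])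

lemma uP_nil (hT : T.IsTree) (i : I) : uP hT i i = SimpleGraph.Walk.nil :=
  uP_eq hT _ (SimpleGraph.Walk.IsPath.nil)

lemma mem_takeUntil_of_mem [DecidableEq I] {ℓ b c d : I} (p : T.Walk ℓ b) (hc : c ∈ p.support)
    (hd : d ∈ p.support) (h1 : d ∉ (p.dropUntil c hc).support) :
    d ∈ (p.takeUntil c hc).support := by
  rw [← p.take_spec hc, SimpleGraph.Walk.mem_support_append_iff] at hd
  tauto

lemma uniq_gate [DecidableEq I] (hT : T.IsTree) {i k k' ℓ : I} (hk : T.Adj k i) (hk' : T.Adj k' i)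
    (hne : k ≠ k') (h1 : k ∈ (uP hT ℓ i).support) (h2 : k' ∈ (uP hT ℓ i).support) : False := by
  set p := uP hT ℓ i with hp
  have hpp : p.IsPath := uP_isPath hT ℓ i
  have hdk : p.dropUntil k h1 = SimpleGraph.Walk.cons hk SimpleGraph.Walk.nil := by
    rw [← uP_adj hT hk]; exact (uP_eq hT _ (hpp.dropUntil h1)).symm
  have h2' : k' ∈ (p.takeUntil k h1).support := by
    apply mem_takeUntil_of_mem p h1 h2
    rw [hdk]; simp [hne.symm, hk'.ne]
  have h1' : k ∈ (p.takeUntil k' h2).support := by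
    apply mem_takeUntil_of_mem p h2 h1
    have hdk' : p.dropUntil k' h2 = SimpleGraph.Walk.cons hk' SimpleGraph.Walk.nil := by
      rw [← uP_adj hT hk']; exact (uP_eq hT _ (hpp.dropUntil h2)).symm
    rw [hdk']; simp [hne, hk.ne]
  have hrp : (p.takeUntil k' h2).IsPath := hpp.takeUntil h2
  have hei : (p.takeUntil k' h2).takeUntil k h1' = p.takeUntil k h1 :=
    (uP_eq hT _ (hrp.takeUntil h1')).symm.trans (uP_eq hT _ (hpp.takeUntil h1))
  have hnm := end_not_mem_takeUntil _ hrp h1' hne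
  rw [hei] at hnm
  exact hnm h2'

lemma exists_gate [DecidableEq I] (hT : T.IsTree) {i j ℓ : I} (hij : T.Adj i j) (hℓ : ℓ ≠ i)
    (h : i ∈ (uP hT ℓ j).support) :
    ∃ k, T.Adj k i ∧ k ≠ j ∧ k ∈ (uP hT ℓ i).support := by
  set p := uP hT ℓ j with hp
  have hpp : p.IsPath := uP_isPath hT ℓ j
  have hq : uP hT ℓ i = p.takeUntil i h := uP_eq hT _ (hpp.takeUntil h)
  obtain ⟨k, hk1, hk2⟩ := exists_adj_end (p.takeUntil i h) hℓ
  refine ⟨k, hk1, ?_, by rw [hq]; exact hk2⟩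
  intro hkj; subst hkj
  exact end_not_mem_takeUntil p hpp h hij.ne hk2

lemma gate_mem [DecidableEq I] (hT : T.IsTree) {i j k ℓ : I} (hij : T.Adj i j) (hki : T.Adj k i)
    (hkj : k ≠ j) (h : k ∈ (uP hT ℓ i).support) : i ∈ (uP hT ℓ j).support := by
  by_contra hi
  set p := uP hT ℓ j with hp
  have hpp : p.IsPath := uP_isPath hT ℓ j
  have hcp : (p.concat hij.symm).IsPath := by
    have he : p.concat hij.symm = (SimpleGraph.Walk.cons hij p.reverse).reverse := by
      simp [SimpleGraph.Walk.reverse_cons, SimpleGraph.Walk.concat_eq_append]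
    rw [he, SimpleGraph.Walk.isPath_reverse_iff, SimpleGraph.Walk.cons_isPath_iff]
    exact ⟨(SimpleGraph.Walk.isPath_reverse_iff p).mpr hpp, by simpa using hi⟩
  have he2 : uP hT ℓ i = p.concat hij.symm := uP_eq hT _ hcp
  rw [he2, SimpleGraph.Walk.support_concat] at h
  have hkp : k ∈ p.support := by
    rw [List.mem_append] at h
    rcases h with h' | h'
    · exact h'
    · simp at h'; exact absurd h' hki.ne
  have hd : p.dropUntil k hkp
      = SimpleGraph.Walk.cons hki (SimpleGraph.Walk.cons hij SimpleGraph.Walk.nil) := by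
    refine (uP_eq hT _ (hpp.dropUntil hkp)).symm.trans (uP_eq hT _ ?_)
    simp [SimpleGraph.Walk.cons_isPath_iff, hki.ne, hij.ne, hkj]
  exact hi (SimpleGraph.Walk.support_dropUntil_subset p hkp (by rw [hd]; simp))

lemma closure (hT : T.IsTree) {k i v m : I} (hvk : v ≠ k) (h : k ∈ (uP hT v i).support)
    (hvm : T.Adj v m) : k ∈ (uP hT m i).support := by
  have hall := (pred_iff hT i k v).mpr h
  have h2 := hall (SimpleGraph.Walk.cons hvm (uP hT m i))
  simp only [SimpleGraph.Walk.support_cons, List.mem_cons] at h2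
  rcases h2 with h1 | h1
  · exact absurd h1.symm hvk
  · exact h1

lemma leaf_subtree [Fintype I] [DecidableEq I] [DecidableRel T.Adj] (hT : T.IsTree) {k i ℓ : I}
    (hki : T.Adj k i) (hdeg : T.degree k = 1) (h : k ∈ (uP hT ℓ i).support) : ℓ = k := by
  by_contra hℓ
  set p := uP hT ℓ i with hp
  have hpp : p.IsPath := uP_isPath hT ℓ i
  obtain ⟨m, hm1, hm2⟩ := exists_adj_end (p.takeUntil k h) hℓ
  have hmem : m ∈ T.neighborFinset k := by
    rw [SimpleGraph.mem_neighborFinset]; exact hm1.symm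
  have himem : i ∈ T.neighborFinset k := by
    rw [SimpleGraph.mem_neighborFinset]; exact hki
  have hmi : m = i := by
    have hc : (T.neighborFinset k).card ≤ 1 := le_of_eq hdeg
    exact Finset.card_le_one.mp hc m hmem i himem
  subst hmi
  exact end_not_mem_takeUntil p hpp h hki.ne hm2

end Stmt16Aux

namespace Stmt16Aux

variable {I : Type*} {T : SimpleGraph I}

lemma maxprin [Fintype I] [DecidableEq I] (hT : T.IsTree)
    (C : Matrix I I ℝ) (hnn : ∀ a b, 0 ≤ C a b) (hadapt : ∀ a b, 0 < C a b ↔ T.Adj a b)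
    (S0 : Set I) (S : Finset I) (k : I) (hkS : k ∈ S) (g : I → ℝ)
    (hgk : g k = 0) (hg0 : ∀ v ∈ S, v ∈ S0 → g v = 0)
    (hgh : ∀ v ∈ S, v ≠ k → v ∉ S0 → (∑ m, C v m) * g v = ∑ m, C v m * g m)
    (hcl : ∀ v ∈ S, v ≠ k → ∀ m, T.Adj v m → m ∈ S) :
    ∀ v ∈ S, g v ≤ 0 := by
  obtain ⟨v₀, hv₀S, hmax⟩ := S.exists_max_image g ⟨k, hkS⟩
  suffices hM0 : g v₀ ≤ 0 by intro v hv; exact le_trans (hmax v hv) hM0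
  have key : ∀ (v : I) (_ : T.Walk v k), v ∈ S → g v = g v₀ → g v₀ ≤ 0 := by
    intro v p
    induction p with
    | nil =>
      intro _ hgv
      rw [← hgv, hgk]
    | @cons v m k' hvm q ih =>
      intro hvS hgv
      by_cases hv0 : v ∈ S0
      · rw [← hgv, hg0 v hvS hv0]
      by_cases hvk : v = k'
      · subst hvk; rw [← hgv, hgk]
      · have hh := hgh v hvS hvk hv0
        have hsum : ∑ x, C v x * (g v₀ - g x) = 0 := by
          have e1 : ∑ x, C v x * (g v₀ - g x) = (∑ x, C v x) * g v - ∑ x, C v x * g x := by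
            rw [hgv, Finset.sum_mul, ← Finset.sum_sub_distrib]
            exact Finset.sum_congr rfl fun x _ => by ring
          rw [e1, hh, sub_self]
        have hnonneg : ∀ x ∈ Finset.univ, 0 ≤ C v x * (g v₀ - g x) := by
          intro x _
          rcases eq_or_lt_of_le (hnn v x) with he | hp
          · rw [← he, zero_mul]
          · have hx : x ∈ S := hcl v hvS hvk x ((hadapt v x).mp hp)
            exact mul_nonneg (le_of_lt hp) (sub_nonneg.mpr (hmax x hx))
        have hz := (Finset.sum_eq_zero_iff_of_nonneg hnonneg).mp hsum
        have hCvm : 0 < C v m := (hadapt v m).mpr hvm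
        have hm := hz m (Finset.mem_univ m)
        have hgm : g m = g v₀ := by
          rcases mul_eq_zero.mp hm with h' | h'
          · exact absurd h' (ne_of_gt hCvm)
          · linarith [sub_eq_zero.mp h']
        exact ih hkS hgk hgh hcl (hcl v hvS hvk m hvm) hgm
  exact key v₀ (uP hT v₀ k) hv₀S rfl

lemma scaling [Fintype I] [DecidableEq I] (hT : T.IsTree)
    (C : Matrix I I ℝ) (hnn : ∀ a b, 0 ≤ C a b) (hadapt : ∀ a b, 0 < C a b ↔ T.Adj a b)
    (S0 : Set I) (V : I → I → ℝ)
    (hV0 : ∀ a, a ∉ S0 → ∀ s ∈ S0, V a s = 0)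
    (hV1 : ∀ a, a ∉ S0 → V a a = 1)
    (hVh : ∀ a, a ∉ S0 → ∀ v, v ∉ S0 → v ≠ a →
      (∑ m, C v m) * V a v = ∑ m, C v m * V a m)
    {i k : I} (hki : T.Adj k i) (hiS : i ∉ S0) (hkS : k ∉ S0) :
    ∀ ℓ, k ∈ (uP hT ℓ i).support → V i ℓ = V i k * V k ℓ := by
  classical
  set S : Finset I := Finset.univ.filter (fun ℓ => k ∈ (uP hT ℓ i).support) with hS
  have hmemS : ∀ ℓ, ℓ ∈ S ↔ k ∈ (uP hT ℓ i).support := by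
    intro ℓ; simp [hS]
  have hkmem : k ∈ S := (hmemS k).mpr (SimpleGraph.Walk.start_mem_support _)
  have hinot : i ∉ S := by
    rw [hmemS, uP_nil hT i]
    simp [hki.ne]
  have hcl' : ∀ v ∈ S, v ≠ k → ∀ m, T.Adj v m → m ∈ S := by
    intro v hv hvk m hm
    exact (hmemS m).mpr (closure hT hvk ((hmemS v).mp hv) hm)
  have harm : ∀ (c : ℝ) (v), v ∈ S → v ≠ k → v ∉ S0 →
      (∑ m, C v m) * (V i v - c * V k v) = ∑ m, C v m * (V i m - c * V k m) := by
    intro c v hv hvk hv0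
    have hvi : v ≠ i := fun h => hinot (h ▸ hv)
    have h1 := hVh i hiS v hv0 hvi
    have h2 := hVh k hkS v hv0 hvk
    have e : ∑ m, C v m * (V i m - c * V k m)
        = (∑ m, C v m * V i m) - c * ∑ m, C v m * V k m := by
      rw [Finset.mul_sum, ← Finset.sum_sub_distrib]
      exact Finset.sum_congr rfl fun x _ => by ring
    rw [e, ← h1, ← h2]; ring
  have harm' : ∀ v ∈ S, v ≠ k → v ∉ S0 →
      (∑ m, C v m) * (V i k * V k v - V i v) = ∑ m, C v m * (V i k * V k m - V i m) := by
    intro v hv hvk hv0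
    have h := harm (V i k) v hv hvk hv0
    have e : ∑ m, C v m * (V i k * V k m - V i m)
        = -∑ m, C v m * (V i m - V i k * V k m) := by
      rw [← Finset.sum_neg_distrib]
      exact Finset.sum_congr rfl fun x _ => by ring
    rw [e, ← h]; ring
  have b1 := maxprin hT C hnn hadapt S0 S k hkmem (fun x => V i x - V i k * V k x)
      (by show V i k - V i k * V k k = 0; rw [hV1 k hkS]; ring)
      (fun v _ hv0 => by show V i v - V i k * V k v = 0
                         rw [hV0 i hiS v hv0, hV0 k hkS v hv0]; ring)
      (harm (V i k)) hcl'
  have b2 := maxprin hT C hnn hadapt S0 S k hkmem (fun x => V i k * V k x - V i x)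
      (by show V i k * V k k - V i k = 0; rw [hV1 k hkS]; ring)
      (fun v _ hv0 => by show V i k * V k v - V i v = 0
                         rw [hV0 i hiS v hv0, hV0 k hkS v hv0]; ring)
      harm' hcl'
  intro ℓ hℓ
  have hℓS : ℓ ∈ S := (hmemS ℓ).mpr hℓ
  have c1 := b1 ℓ hℓS
  have c2 := b2 ℓ hℓS
  linarith

end Stmt16Aux

/-- HIC recursion on trees: the restricted harmonic influence
`H^{i→j} = ∑_{ℓ ∈ I^{<ij}} W^{(i)}(ℓ)` satisfies the message-passing
recursion `H^{i→j} = ∑_{k ∈ N_i \ {j}} W^{(i)}(k) · H^{k→i} + 1` for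
`i ∉ S⁰`.  Here `V a = W^{(a)}` is the voltage equal to `0` on `S⁰`, `1`
at `a` and harmonic elsewhere, and `I^{<ab}` is the set of nodes whose path
to `b` passes through `a`. (For a stubborn neighbor `k` the corresponding
summand vanishes since `W^{(i)}(k) = 0`.) -/
theorem stmt16 {I : Type*} [Fintype I] [DecidableEq I]
    (T : SimpleGraph I) [DecidableRel T.Adj] (hT : T.IsTree)
    (C : Matrix I I ℝ) (hsym : C.IsSymm) (hnn : ∀ a b, 0 ≤ C a b)
    (hadapt : ∀ a b, 0 < C a b ↔ T.Adj a b)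
    (S0 : Set I) (hleaf : ∀ s ∈ S0, T.degree s = 1)
    (V : I → I → ℝ)
    (hV0 : ∀ a, a ∉ S0 → ∀ s ∈ S0, V a s = 0)
    (hV1 : ∀ a, a ∉ S0 → V a a = 1)
    (hVh : ∀ a, a ∉ S0 → ∀ v, v ∉ S0 → v ≠ a →
      (∑ m, C v m) * V a v = ∑ m, C v m * V a m)
    (i j : I) (hadj : T.Adj i j) (hiS : i ∉ S0) :
    ∑ ℓ ∈ Finset.univ.filter (fun ℓ => ∀ p : T.Walk ℓ j, i ∈ p.support), V i ℓ
      = (∑ k ∈ (T.neighborFinset i).erase j, V i k *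
          ∑ ℓ ∈ Finset.univ.filter (fun ℓ => ∀ p : T.Walk ℓ i, k ∈ p.support),
            V k ℓ) + 1 := by
  classical
  have hfil : ∀ (b a : I),
      (Finset.univ.filter (fun ℓ => ∀ p : T.Walk ℓ a, b ∈ p.support))
        = Finset.univ.filter (fun ℓ => b ∈ (Stmt16Aux.uP hT ℓ a).support) := by
    intro b a
    apply Finset.filter_congr
    intro x _
    exact Stmt16Aux.pred_iff hT a b x
  set N := (T.neighborFinset i).erase j with hN
  set B : I → I → Finset I :=
    fun b a => Finset.univ.filter (fun ℓ => b ∈ (Stmt16Aux.uP hT ℓ a).support) with hB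
  have hmemB : ∀ b a ℓ, ℓ ∈ B b a ↔ b ∈ (Stmt16Aux.uP hT ℓ a).support := by
    intro b a ℓ; simp [hB]
  have hsplit : B i j = insert i (N.biUnion (fun k => B k i)) := by
    ext ℓ
    simp only [Finset.mem_insert, Finset.mem_biUnion, hmemB, hN, Finset.mem_erase,
      SimpleGraph.mem_neighborFinset]
    constructor
    · intro h
      by_cases hℓi : ℓ = i
      · exact Or.inl hℓi
      · right
        obtain ⟨k, hk1, hk2, hk3⟩ := Stmt16Aux.exists_gate hT hadj hℓi h
        exact ⟨k, ⟨hk2, hk1.symm⟩, hk3⟩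
    · rintro (rfl | ⟨k, ⟨hk2, hk1⟩, hk3⟩)
      · exact SimpleGraph.Walk.start_mem_support _
      · exact Stmt16Aux.gate_mem hT hadj hk1.symm hk2 hk3
  have hinot : i ∉ N.biUnion (fun k => B k i) := by
    simp only [Finset.mem_biUnion, hmemB, hN, Finset.mem_erase, SimpleGraph.mem_neighborFinset,
      not_exists]
    rintro k ⟨⟨hkj, hik⟩, hmem⟩
    rw [Stmt16Aux.uP_nil hT i] at hmem
    simp only [SimpleGraph.Walk.support_nil, List.mem_singleton] at hmem
    exact hik.ne' hmem
  have hdisj : (↑N : Set I).PairwiseDisjoint (fun k => B k i) := by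
    intro k hk k' hk' hne
    simp only [Finset.coe_mem, Finset.mem_coe, hN, Finset.mem_erase,
      SimpleGraph.mem_neighborFinset] at hk hk'
    simp only [Function.onFun]
    rw [Finset.disjoint_left]
    intro ℓ h1 h2
    rw [hmemB] at h1 h2
    exact Stmt16Aux.uniq_gate hT hk.2.symm hk'.2.symm hne h1 h2
  have hper : ∀ k ∈ N, ∑ ℓ ∈ B k i, V i ℓ = V i k * ∑ ℓ ∈ B k i, V k ℓ := by
    intro k hk
    rw [hN, Finset.mem_erase, SimpleGraph.mem_neighborFinset] at hk
    obtain ⟨hkj, hik⟩ := hk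
    by_cases hk0 : k ∈ S0
    · have hsing : B k i = {k} := by
        ext ℓ
        rw [hmemB, Finset.mem_singleton]
        constructor
        · exact fun h => Stmt16Aux.leaf_subtree hT hik.symm (hleaf k hk0) h
        · rintro rfl; exact SimpleGraph.Walk.start_mem_support _
      rw [hsing, Finset.sum_singleton, Finset.sum_singleton, hV0 i hiS k hk0, zero_mul]
    · rw [Finset.mul_sum]
      apply Finset.sum_congr rfl
      intro ℓ hℓ
      rw [hmemB] at hℓ
      exact Stmt16Aux.scaling hT C hnn hadapt S0 V hV0 hV1 hVh hik.symm hiS hk0 ℓ hℓ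
  have hRHS : (∑ k ∈ N, V i k *
        ∑ ℓ ∈ Finset.univ.filter (fun ℓ => ∀ p : T.Walk ℓ i, k ∈ p.support), V k ℓ)
      = ∑ k ∈ N, V i k * ∑ ℓ ∈ B k i, V k ℓ :=
    Finset.sum_congr rfl fun k _ => by rw [hfil k i]
  rw [hfil i j, hRHS]
  show ∑ ℓ ∈ B i j, V i ℓ = _
  rw [hsplit, Finset.sum_insert hinot, Finset.sum_biUnion hdisj, hV1 i hiS,
    Finset.sum_congr rfl hper]
  ring
end

section
/- (Strict row-sum bound at the fixed point) Under the same d-regular setting, the limit messages W^{k→i} of the previous statement satisfy Σ_{k ∈ N_i \ {j}} W^{k→i} < 1 for every node i ∈ I \ S⁰ and every j ∈ N_i. -/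
open Finset

/-- Strict row-sum bound at the fixed point: the limit messages
satisfy `∑_{k ∈ N_i \ {j}} W^{k→i} < 1` for every `i ∉ S⁰` and `j ∈ N_i`. -/
theorem stmt18 {I : Type*} [Fintype I] [DecidableEq I]
    (G : SimpleGraph I) [DecidableRel G.Adj] (hG : G.Connected)
    (S0 : Finset I) (hS0 : S0.Nonempty)
    (d : ℕ) (hd : 1 ≤ d) (hdeg : ∀ i, i ∉ S0 → G.degree i = d)
    (Wl : I → I → ℝ)
    (hrange : ∀ i j, G.Adj i j → Wl i j ∈ Set.Ico (0 : ℝ) 1)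
    (hfix : ∀ i j, G.Adj i j → i ∉ S0 → Wl i j =
      ((d : ℝ) - ∑ k ∈ (G.neighborFinset i).erase j, Wl k i)⁻¹)
    (hfix0 : ∀ i j, G.Adj i j → i ∈ S0 → Wl i j = 0) :
    ∀ i, i ∉ S0 → ∀ j ∈ G.neighborFinset i,
      ∑ k ∈ (G.neighborFinset i).erase j, Wl k i < 1 := by
  intro i0 hi0 j0 hj0
  have hcard : ∀ a b, a ∉ S0 → G.Adj a b →
      ((G.neighborFinset a).erase b).card = d - 1 := by
    intro a b ha hab
    rw [Finset.card_erase_of_mem (by rwa [SimpleGraph.mem_neighborFinset]),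
      SimpleGraph.card_neighborFinset_eq_degree, hdeg a ha]
  by_cases hd1 : d = 1
  · -- trivial case: the erase set is empty
    have hc : ((G.neighborFinset i0).erase j0).card = 0 := by
      rw [hcard i0 j0 hi0 ((SimpleGraph.mem_neighborFinset _ _ _).1 hj0), hd1]
    rw [Finset.card_eq_zero] at hc
    rw [hc]
    simp
  have hd2 : 2 ≤ d := by omega
  have hW0 : ∀ a k : I, G.Adj k a → 0 ≤ Wl k a := fun a k h => (hrange k a h).1
  have hmem : ∀ (a b k : I), k ∈ (G.neighborFinset a).erase b → G.Adj k a := by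
    intro a b k hk
    exact ((SimpleGraph.mem_neighborFinset _ _ _).1 (Finset.mem_of_mem_erase hk)).symm
  have hSnn : ∀ a b : I, 0 ≤ ∑ k ∈ (G.neighborFinset a).erase b, Wl k a := by
    intro a b
    exact Finset.sum_nonneg fun k hk => hW0 a k (hmem a b k hk)
  have hdr : ((d : ℝ) - 1) = ((d - 1 : ℕ) : ℝ) := by
    push_cast [Nat.cast_sub hd]; ring
  have hEne : ∀ a b, a ∉ S0 → G.Adj a b →
      ((G.neighborFinset a).erase b).Nonempty := by
    intro a b ha hab
    rw [← Finset.card_pos, hcard a b ha hab]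
    omega
  have hSlt : ∀ a b, a ∉ S0 → G.Adj a b →
      (∑ k ∈ (G.neighborFinset a).erase b, Wl k a) < (d : ℝ) - 1 := by
    intro a b ha hab
    calc (∑ k ∈ (G.neighborFinset a).erase b, Wl k a)
        < ∑ _k ∈ (G.neighborFinset a).erase b, (1 : ℝ) :=
          Finset.sum_lt_sum_of_nonempty (hEne a b ha hab)
            (fun k hk => (hrange k a (hmem a b k hk)).2)
      _ = (((G.neighborFinset a).erase b).card : ℝ) := by simp
      _ = (d : ℝ) - 1 := by rw [hcard a b ha hab, hdr]
  -- the max of row sums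
  set Q : Finset (I × I) :=
      Finset.univ.filter (fun p : I × I => p.1 ∉ S0 ∧ G.Adj p.1 p.2) with hQ
  have hQmem : ∀ a b, a ∉ S0 → G.Adj a b → (a, b) ∈ Q := by
    intro a b ha hab
    simp [hQ, ha, hab]
  have hQne : Q.Nonempty := ⟨(i0, j0), hQmem i0 j0 hi0 ((SimpleGraph.mem_neighborFinset _ _ _).1 hj0)⟩
  set T : ℝ := Q.sup' hQne (fun p => ∑ k ∈ (G.neighborFinset p.1).erase p.2, Wl k p.1) with hT
  have hub0 : ∀ a b, a ∉ S0 → G.Adj a b →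
      (∑ k ∈ (G.neighborFinset a).erase b, Wl k a) ≤ T := by
    intro a b ha hab
    exact Finset.le_sup' (fun p : I × I => ∑ k ∈ (G.neighborFinset p.1).erase p.2, Wl k p.1) (hQmem a b ha hab)
  obtain ⟨p, hpQ, hpT⟩ := Finset.exists_mem_eq_sup' hQne
      (fun p : I × I => ∑ k ∈ (G.neighborFinset p.1).erase p.2, Wl k p.1)
  have hp1 : p.1 ∉ S0 ∧ G.Adj p.1 p.2 := by simpa [hQ] using hpQ
  have hTeq : T = ∑ k ∈ (G.neighborFinset p.1).erase p.2, Wl k p.1 := hT.trans hpT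
  have hTlt : T < (d : ℝ) - 1 := by
    rw [hTeq]
    exact hSlt p.1 p.2 hp1.1 hp1.2
  have hTpos : (0 : ℝ) < (d : ℝ) - T := by
    have : (1 : ℝ) ≤ (d : ℝ) - 1 := by
      have : (2 : ℝ) ≤ (d : ℝ) := by exact_mod_cast hd2
      linarith
    linarith
  have hWle : ∀ a k, G.Adj k a → Wl k a ≤ ((d : ℝ) - T)⁻¹ := by
    intro a k hka
    by_cases hk : k ∈ S0
    · rw [hfix0 k a hka hk]
      positivity
    · rw [hfix k a hka hk]
      have hle : (d : ℝ) - T ≤ (d : ℝ) - ∑ m ∈ (G.neighborFinset k).erase a, Wl m k := by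
        have := hub0 k a hk hka
        linarith
      exact inv_anti₀ hTpos hle
  have hT1 : T ≤ 1 := by
    have hkey : T ≤ ((d : ℝ) - 1) * ((d : ℝ) - T)⁻¹ := by
      calc T = ∑ k ∈ (G.neighborFinset p.1).erase p.2, Wl k p.1 := hTeq
        _ ≤ ∑ _k ∈ (G.neighborFinset p.1).erase p.2, ((d : ℝ) - T)⁻¹ :=
            Finset.sum_le_sum (fun k hk => hWle p.1 k (hmem p.1 p.2 k hk))
        _ = (((G.neighborFinset p.1).erase p.2).card : ℝ) * ((d : ℝ) - T)⁻¹ := by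
            rw [Finset.sum_const, nsmul_eq_mul]
        _ = ((d : ℝ) - 1) * ((d : ℝ) - T)⁻¹ := by rw [hcard p.1 p.2 hp1.1 hp1.2, hdr]
    have hmul : T * ((d : ℝ) - T) ≤ (d : ℝ) - 1 := by
      have h2 := mul_le_mul_of_nonneg_right hkey (le_of_lt hTpos)
      rwa [mul_assoc, inv_mul_cancel₀ (ne_of_gt hTpos), mul_one] at h2
    by_contra hcon
    push_neg at hcon
    nlinarith [mul_pos (sub_pos.2 hcon) (sub_pos.2 hTlt)]
  have hub : ∀ a b, a ∉ S0 → G.Adj a b →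
      (∑ k ∈ (G.neighborFinset a).erase b, Wl k a) ≤ 1 := by
    intro a b ha hab
    exact le_trans (hub0 a b ha hab) hT1
  have hd1pos : (0 : ℝ) < (d : ℝ) - 1 := by
    have : (2 : ℝ) ≤ (d : ℝ) := by exact_mod_cast hd2
    linarith
  -- closure of the equality set
  have hclosure : ∀ a b, a ∉ S0 → G.Adj a b →
      (∑ k ∈ (G.neighborFinset a).erase b, Wl k a) = 1 →
      ∀ k ∈ (G.neighborFinset a).erase b,
        k ∉ S0 ∧ (∑ m ∈ (G.neighborFinset k).erase a, Wl m k) = 1 := by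
    intro a b ha hab h1 k hk
    have hka : G.Adj k a := hmem a b k hk
    have hle : ∀ m ∈ (G.neighborFinset a).erase b, Wl m a ≤ ((d : ℝ) - 1)⁻¹ := by
      intro m hm
      have hma : G.Adj m a := hmem a b m hm
      by_cases hmS : m ∈ S0
      · rw [hfix0 m a hma hmS]
        positivity
      · rw [hfix m a hma hmS]
        have hle2 : (d : ℝ) - 1 ≤ (d : ℝ) - ∑ x ∈ (G.neighborFinset m).erase a, Wl x m := by
          have := hub m a hmS hma
          linarith
        exact inv_anti₀ hd1pos hle2
    have hsum1 : (∑ _m ∈ (G.neighborFinset a).erase b, ((d : ℝ) - 1)⁻¹) = 1 := by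
      rw [Finset.sum_const, nsmul_eq_mul, hcard a b ha hab, ← hdr,
        mul_inv_cancel₀ (ne_of_gt hd1pos)]
    have heq : ∀ m ∈ (G.neighborFinset a).erase b, Wl m a = ((d : ℝ) - 1)⁻¹ :=
      (Finset.sum_eq_sum_iff_of_le hle).1 (by rw [h1, hsum1])
    have hWk := heq k hk
    have hkS : k ∉ S0 := by
      intro hkS
      rw [hfix0 k a hka hkS] at hWk
      have : (0 : ℝ) < ((d : ℝ) - 1)⁻¹ := by positivity
      linarith [hWk ▸ this]
    refine ⟨hkS, ?_⟩
    rw [hfix k a hka hkS] at hWk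
    have := inv_injective hWk
    linarith [this]
  -- distance to S0
  have hne : ∀ a : I, (S0.image (G.dist a)).Nonempty := fun a => hS0.image _
  set δ : I → ℕ := fun a => (S0.image (G.dist a)).min' (hne a) with hδ
  have hδle : ∀ a s, s ∈ S0 → δ a ≤ G.dist a s := by
    intro a s hs
    exact Finset.min'_le _ _ (Finset.mem_image_of_mem _ hs)
  have hδex : ∀ a : I, ∃ s ∈ S0, G.dist a s = δ a := by
    intro a
    have := Finset.min'_mem (S0.image (G.dist a)) (hne a)
    rw [Finset.mem_image] at this
    obtain ⟨s, hs, h⟩ := this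
    exact ⟨s, hs, h⟩
  have hδ0 : ∀ a : I, a ∉ S0 → 1 ≤ δ a := by
    intro a ha
    by_contra h
    push_neg at h
    interval_cases h' : δ a
    obtain ⟨s, hs, hds⟩ := hδex a
    rw [h'] at hds
    have : a = s := hG.dist_eq_zero_iff.1 hds
    exact ha (this ▸ hs)
  have hδadj : ∀ a x : I, G.Adj a x → δ a ≤ δ x + 1 := by
    intro a x hax
    obtain ⟨s, hs, hds⟩ := hδex x
    have h1 : G.dist a s ≤ G.dist a x + G.dist x s := hG.dist_triangle
    have h2 : G.dist a x = 1 := SimpleGraph.dist_eq_one_iff_adj.2 hax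
    have h3 := hδle a s hs
    omega
  have hδstep : ∀ a : I, a ∉ S0 → ∃ x, G.Adj a x ∧ δ x + 1 = δ a := by
    intro a ha
    obtain ⟨s, hs, hds⟩ := hδex a
    have h1 : 1 ≤ δ a := hδ0 a ha
    obtain ⟨p, hp⟩ := (hG.preconnected a s).exists_walk_length_eq_dist
    cases p with
    | nil => simp at hp; rw [SimpleGraph.dist_self] at hds; omega
    | @cons _ x _ hax q =>
      refine ⟨x, hax, ?_⟩
      have hq : G.dist x s ≤ q.length := SimpleGraph.dist_le q
      have hlen : q.length + 1 = G.dist a s := by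
        simpa [SimpleGraph.Walk.length_cons] using hp
      have h2 := hδle x s hs
      have h3 := hδadj a x hax
      omega
  -- bound on δ
  set M : ℕ := Finset.univ.sup δ with hM
  have hMb : ∀ a : I, δ a ≤ M := fun a => Finset.le_sup (Finset.mem_univ a)
  -- Lemma 1: strict descent propagates to S0
  have L1 : ∀ n : ℕ, ∀ v b : I, v ∉ S0 → G.Adj v b →
      (∑ k ∈ (G.neighborFinset v).erase b, Wl k v) = 1 → δ v ≤ n →
      ∀ x, G.Adj v x → x ≠ b → δ x < δ v → False := by
    intro n
    induction n with
    | zero =>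
      intro v b _ _ _ hv x _ _ hx
      omega
    | succ n IH =>
      intro v b hvS hvb h1 hvn x hvx hxb hxδ
      have hxmem : x ∈ (G.neighborFinset v).erase b :=
        Finset.mem_erase.2 ⟨hxb, (SimpleGraph.mem_neighborFinset _ _ _).2 hvx⟩
      obtain ⟨hxS, hx1⟩ := hclosure v b hvS hvb h1 x hxmem
      obtain ⟨y, hxy, hyδ⟩ := hδstep x hxS
      have hyv : y ≠ v := by
        intro h
        subst h
        omega
      exact IH x v hxS hvx.symm hx1 (by omega) y hxy hyv (by omega)
  -- Lemma 2: no equality pair at all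
  have L2 : ∀ (k : ℕ) (a b : I), a ∉ S0 → G.Adj a b →
      (∑ m ∈ (G.neighborFinset a).erase b, Wl m a) = 1 → M < δ a + k → False := by
    intro k
    induction k with
    | zero =>
      intro a b _ _ _ h
      have := hMb a
      omega
    | succ k IH =>
      intro a b haS hab h1 hMk
      obtain ⟨x, hax, hxδ⟩ := hδstep a haS
      by_cases hxb : x = b
      · obtain ⟨u, hu⟩ := hEne a b haS hab
        obtain ⟨huS, hu1⟩ := hclosure a b haS hab h1 u hu
        have hua : G.Adj u a := hmem a b u hu
        obtain ⟨y, huy, hyδ⟩ := hδstep u huS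
        by_cases hya : y = a
        · have hau : δ a + 1 = δ u := by rw [← hya]; exact hyδ
          exact IH u a huS hua hu1 (by omega)
        · exact L1 (δ u) u a huS hua hu1 le_rfl y huy hya (by omega)
      · exact L1 (δ a) a b haS hab h1 le_rfl x hax hxb (by omega)
  -- conclusion
  by_contra hcon
  push_neg at hcon
  have hij : G.Adj i0 j0 := (SimpleGraph.mem_neighborFinset _ _ _).1 hj0
  have h1 : (∑ k ∈ (G.neighborFinset i0).erase j0, Wl k i0) = 1 :=
    le_antisymm (hub i0 j0 hi0 hij) hcon
  exact L2 (M + 1) i0 j0 hi0 hij h1 (by omega)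
end
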